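/- arXiv:2306.03563 — 3 statements merged into one kernel-verified Lean document; each statement's English description precedes it below -/
import Mathlib

section
/- Let A = D − L − U be an H₊-matrix with D = diag(A), L, U its strictly lower/upper triangular parts, B = L + U, and let A be invertible. Let Ω₁, Ω₂ be positive diagonal matrices with Ω₂ ≥ D_{Ω₁}, φ a real diagonal matrix, Ψ ≥ 0 an n×n matrix, α > 0, β ≥ 0, and set M = (1/α)(D − βL), N = (1/α)[(1 − α)D + (α − β)L + αU]. Define H̄ = ⟨M_{Ω₁}⟩ + |φ_{Ω₁}| + Ω₂ and F̄ = |N_{Ω₁} + φ_{Ω₁}| + |Ω₂ − A_{Ω₁}| + 2|A|Ψ|A⁻¹|Ω₂. Then, entrywise, α(H̄ − F̄) ≥ 2 min{1, α} D_{Ω₁} − 2 max{α, β} (|B_{Ω₁}| + |A|Ψ|A⁻¹|Ω₂). In particular, if moreover max{α, β}·ρ((D_{Ω₁})⁻¹(|B_{Ω₁}| + |A|Ψ|A⁻¹|Ω₂)) < min{1, α}, then H̄ − F̄ is a nonsingular M-matrix. -/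
open Matrix Filter Topology

noncomputable section

variable {n : ℕ}

/-- entrywise absolute value of a vector -/
def vecAbs (x : Fin n → ℝ) : Fin n → ℝ := fun i => |x i|

/-- entrywise absolute value of a matrix -/
def matAbs (A : Matrix (Fin n) (Fin n) ℝ) : Matrix (Fin n) (Fin n) ℝ :=
  Matrix.of fun i j => |A i j|

/-- positive diagonal matrix -/
def PosDiag (Ω : Matrix (Fin n) (Fin n) ℝ) : Prop := Ω.IsDiag ∧ ∀ i, 0 < Ω i i

/-- comparison matrix ⟨A⟩ -/
def compMat (A : Matrix (Fin n) (Fin n) ℝ) : Matrix (Fin n) (Fin n) ℝ :=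
  Matrix.of fun i j => if i = j then |A i j| else -|A i j|

/-- Z-matrix: nonpositive off-diagonal entries -/
def IsZmat (A : Matrix (Fin n) (Fin n) ℝ) : Prop := ∀ i j, i ≠ j → A i j ≤ 0

/-- nonsingular M-matrix: a Z-matrix, invertible, with entrywise nonnegative inverse -/
def IsMmat (A : Matrix (Fin n) (Fin n) ℝ) : Prop :=
  IsZmat A ∧ IsUnit A ∧ ∀ i j, 0 ≤ A⁻¹ i j

/-- H₊-matrix: comparison matrix is a nonsingular M-matrix, positive diagonal entries -/
def IsHplus (A : Matrix (Fin n) (Fin n) ℝ) : Prop :=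
  IsMmat (compMat A) ∧ ∀ i, 0 < A i i

/-- P-matrix: all principal minors are positive -/
def IsPmat (A : Matrix (Fin n) (Fin n) ℝ) : Prop :=
  ∀ s : Finset (Fin n),
    0 < (A.submatrix (fun i : {i // i ∈ s} => (i : Fin n))
          (fun i : {i // i ∈ s} => (i : Fin n))).det

/-- spectral radius, via the complex spectrum -/
def specRad (A : Matrix (Fin n) (Fin n) ℝ) : ℝ :=
  sSup ((fun μ : ℂ => ‖μ‖) '' spectrum ℂ (A.map Complex.ofReal))

/-- spectral (operator 2-) norm -/
def spec2Norm (A : Matrix (Fin n) (Fin n) ℝ) : ℝ :=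
  ‖Matrix.toEuclideanCLM (𝕜 := ℝ) A‖

/-- strict diagonal dominance -/
def SDD (A : Matrix (Fin n) (Fin n) ℝ) : Prop :=
  ∀ i, (∑ j ∈ Finset.univ.erase i, |A i j|) < |A i i|

/-- `z` solves the implicit complementarity problem ICP(q, A, ζ) -/
def SolvesICP (A : Matrix (Fin n) (Fin n) ℝ) (q : Fin n → ℝ)
    (ζ : (Fin n → ℝ) → (Fin n → ℝ)) (z : Fin n → ℝ) : Prop :=
  (∀ i, 0 ≤ (A.mulVec z + q) i) ∧ (∀ i, 0 ≤ (z - ζ z) i) ∧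
    (z - ζ z) ⬝ᵥ (A.mulVec z + q) = 0

/-- the sequences `x`, `z` are produced by Method 3.1 -/
def Method31 (A M N φ Ω₁ Ω₂ : Matrix (Fin n) (Fin n) ℝ) (q : Fin n → ℝ)
    (ζ : (Fin n → ℝ) → (Fin n → ℝ)) (γ : ℝ) (x z : ℕ → Fin n → ℝ) : Prop :=
  (∀ k, A *ᵥ z k = γ⁻¹ • (Ω₂ *ᵥ (vecAbs (x k) - x k)) - q) ∧
  (∀ k, x (k+1) = (Ω₂ + M * Ω₁ + φ * Ω₁)⁻¹ *ᵥ
      ((N * Ω₁ + φ * Ω₁) *ᵥ x k + (Ω₂ - A * Ω₁) *ᵥ vecAbs (x k)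
        - γ • (A *ᵥ ζ (z k)) - γ • q))


-- ===== auxiliary lemmas =====

lemma aux_mul_isDiag_apply {Ω X : Matrix (Fin n) (Fin n) ℝ} (h : Ω.IsDiag) (i j : Fin n) :
    (X * Ω) i j = X i j * Ω j j := by
  rw [Matrix.mul_apply]
  rw [Finset.sum_eq_single j]
  · intro b _ hb; rw [h hb, mul_zero]
  · intro hj; exact absurd (Finset.mem_univ j) hj

lemma aux_mul_entries_nonneg {X Y : Matrix (Fin n) (Fin n) ℝ} (hX : ∀ i j, 0 ≤ X i j)
    (hY : ∀ i j, 0 ≤ Y i j) : ∀ i j, 0 ≤ (X * Y) i j := by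
  intro i j
  rw [Matrix.mul_apply]
  exact Finset.sum_nonneg fun k _ => mul_nonneg (hX i k) (hY k j)

lemma aux_pow_entries_nonneg {X : Matrix (Fin n) (Fin n) ℝ} (hX : ∀ i j, 0 ≤ X i j) :
    ∀ (k : ℕ) (i j : Fin n), 0 ≤ (X ^ k) i j := by
  intro k
  induction k with
  | zero => intro i j; simp [Matrix.one_apply]; positivity
  | succ m ih => rw [pow_succ]; exact aux_mul_entries_nonneg ih hX

lemma aux_mulVec_mono {X Y : Matrix (Fin n) (Fin n) ℝ} {v : Fin n → ℝ}
    (hXY : ∀ i j, X i j ≤ Y i j) (hv : ∀ i, 0 ≤ v i) (i : Fin n) :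
    (X *ᵥ v) i ≤ (Y *ᵥ v) i := by
  simp only [Matrix.mulVec, dotProduct]
  exact Finset.sum_le_sum fun j _ => mul_le_mul_of_nonneg_right (hXY i j) (hv j)

section AuxNorm

attribute [local instance] Matrix.linftyOpNormedRing Matrix.linftyOpNormedAlgebra

lemma aux_linfty_entry_le_norm (X : Matrix (Fin n) (Fin n) ℝ) (i j : Fin n) :
    |X i j| ≤ ‖X‖ := by
  have h1 : ‖X i j‖₊ ≤ ∑ k, ‖X i k‖₊ :=
    Finset.single_le_sum (f := fun k => ‖X i k‖₊) (fun k _ => zero_le) (Finset.mem_univ j)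
  have h2 : (∑ k, ‖X i k‖₊) ≤ ‖X‖₊ := by
    rw [Matrix.linfty_opNNNorm_def]
    exact Finset.le_sup (f := fun i => ∑ k, ‖X i k‖₊) (Finset.mem_univ i)
  have h3 := h1.trans h2
  calc |X i j| = ((‖X i j‖₊ : ℝ)) := by simp [Real.norm_eq_abs]
    _ ≤ (‖X‖₊ : ℝ) := by exact_mod_cast h3
    _ = ‖X‖ := rfl

lemma aux_inv_one_sub_nonneg {J : Matrix (Fin n) (Fin n) ℝ}
    (hJ0 : ∀ i j, 0 ≤ J i j) (hrow : ∀ i, ∑ j, J i j < 1) :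
    IsUnit (1 - J).det ∧ ∀ i j, 0 ≤ (1 - J)⁻¹ i j := by
  set q : NNReal := Finset.univ.sup (fun i => ∑ j, ‖J i j‖₊) with hq
  have hqrow : ∀ i, ((∑ j, ‖J i j‖₊ : NNReal) : ℝ) = ∑ j, J i j := by
    intro i
    push_cast
    exact Finset.sum_congr rfl fun j _ => by
      rw [Real.norm_eq_abs, abs_of_nonneg (hJ0 i j)]
  have hq1 : q < 1 := by
    rcases isEmpty_or_nonempty (Fin n) with he | hne
    · simp [hq, Finset.univ_eq_empty]
    · rw [hq, Finset.sup_lt_iff (by norm_num : (⊥ : NNReal) < 1)]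
      intro i _
      have h := hrow i
      rw [← hqrow i] at h
      exact_mod_cast h
  have hJq : ‖J‖₊ ≤ q := le_of_eq (Matrix.linfty_opNNNorm_def J)
  have hdet : (1 - J).det ≠ 0 := by
    intro hdet0
    obtain ⟨v, hv0, hv⟩ := Matrix.exists_mulVec_eq_zero_iff.mpr hdet0
    have hvJ : ∀ i, v i = (J *ᵥ v) i := by
      intro i
      have h := congrFun hv i
      simp only [Matrix.sub_mulVec, Matrix.one_mulVec, Pi.sub_apply, Pi.zero_apply] at h
      linarith
    obtain ⟨k, hk⟩ : ∃ k, v k ≠ 0 := by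
      by_contra h
      push_neg at h
      exact hv0 (funext h)
    have hne : (Finset.univ : Finset (Fin n)).Nonempty := ⟨k, Finset.mem_univ k⟩
    obtain ⟨i, _, hmax⟩ := Finset.exists_max_image Finset.univ (fun i => |v i|) hne
    have hvi : 0 < |v i| := lt_of_lt_of_le (abs_pos.mpr hk) (hmax k (Finset.mem_univ k))
    have hkey : |v i| ≤ (∑ j, J i j) * |v i| := by
      calc |v i| = |(J *ᵥ v) i| := by rw [← hvJ i]
        _ ≤ ∑ j, J i j * |v j| := by
            rw [Matrix.mulVec, dotProduct]
            refine (Finset.abs_sum_le_sum_abs _ _).trans ?_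
            exact Finset.sum_le_sum fun j _ => by
              rw [abs_mul, abs_of_nonneg (hJ0 i j)]
        _ ≤ ∑ j, J i j * |v i| :=
            Finset.sum_le_sum fun j _ =>
              mul_le_mul_of_nonneg_left (hmax j (Finset.mem_univ j)) (hJ0 i j)
        _ = (∑ j, J i j) * |v i| := by rw [Finset.sum_mul]
    nlinarith [hrow i]
  have hWdet : IsUnit (1 - J).det := isUnit_iff_ne_zero.mpr hdet
  refine ⟨hWdet, ?_⟩
  have hWinv : (1 - J)⁻¹ * (1 - J) = 1 := Matrix.nonsing_inv_mul _ hWdet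
  have htel : ∀ K : ℕ, (1 - J) * (∑ k ∈ Finset.range K, J ^ k) = 1 - J ^ K := by
    intro K
    induction K with
    | zero => simp
    | succ m ih =>
        rw [Finset.sum_range_succ, mul_add, ih, sub_mul, one_mul, pow_succ']
        abel
  have hrep : ∀ K : ℕ, (1 - J)⁻¹ = (∑ k ∈ Finset.range K, J ^ k) + (1 - J)⁻¹ * J ^ K := by
    intro K
    have h1 : (1 - J) * (∑ k ∈ Finset.range K, J ^ k) + J ^ K = 1 := by
      rw [htel K]; abel
    calc (1 - J)⁻¹ = (1 - J)⁻¹ * ((1 - J) * (∑ k ∈ Finset.range K, J ^ k) + J ^ K) := by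
          rw [h1, mul_one]
      _ = ((1 - J)⁻¹ * (1 - J)) * (∑ k ∈ Finset.range K, J ^ k) + (1 - J)⁻¹ * J ^ K := by
          rw [mul_add, mul_assoc]
      _ = _ := by rw [hWinv, one_mul]
  intro i j
  have hbound : ∀ K : ℕ, -(‖(1 - J)⁻¹‖ * (q : ℝ) ^ (K + 1)) ≤ (1 - J)⁻¹ i j := by
    intro K
    have hS : 0 ≤ (∑ k ∈ Finset.range (K + 1), J ^ k) i j := by
      rw [Matrix.sum_apply]
      exact Finset.sum_nonneg fun k _ => aux_pow_entries_nonneg hJ0 k i j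
    have hEntry : ((1 - J)⁻¹ : Matrix (Fin n) (Fin n) ℝ) i j
        = (∑ k ∈ Finset.range (K + 1), J ^ k) i j + ((1 - J)⁻¹ * J ^ (K + 1)) i j := by
      conv_lhs => rw [hrep (K + 1)]
      rfl
    have hJKpow : ‖J ^ (K + 1)‖ ≤ (q : ℝ) ^ (K + 1) := by
      have h1 : ‖J ^ (K + 1)‖₊ ≤ q ^ (K + 1) :=
        (nnnorm_pow_le' J (Nat.succ_pos K)).trans (pow_le_pow_left' hJq (K + 1))
      exact_mod_cast h1
    have habs : |((1 - J)⁻¹ * J ^ (K + 1)) i j| ≤ ‖(1 - J)⁻¹‖ * (q : ℝ) ^ (K + 1) := by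
      refine (aux_linfty_entry_le_norm _ i j).trans ?_
      refine (norm_mul_le _ _).trans ?_
      exact mul_le_mul_of_nonneg_left hJKpow (norm_nonneg _)
    rw [hEntry]
    have h5 := abs_le.mp habs
    linarith
  have h0 : Tendsto (fun K : ℕ => (q : ℝ) ^ K) atTop (𝓝 0) :=
    tendsto_pow_atTop_nhds_zero_of_lt_one q.coe_nonneg (by exact_mod_cast hq1)
  have h1 : Tendsto (fun K : ℕ => -(‖(1 - J)⁻¹‖ * (q : ℝ) ^ (K + 1))) atTop (𝓝 0) := by
    have h2 := ((h0.comp (tendsto_add_atTop_nat 1)).const_mul ‖(1 - J)⁻¹‖).neg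
    simpa using h2
  exact le_of_tendsto' h1 hbound

lemma aux_linfty_rowsum_le_norm (X : Matrix (Fin n) (Fin n) ℝ) (i : Fin n) :
    ∑ j, |X i j| ≤ ‖X‖ := by
  have h2 : (∑ k, ‖X i k‖₊) ≤ ‖X‖₊ := by
    rw [Matrix.linfty_opNNNorm_def]
    exact Finset.le_sup (f := fun i => ∑ k, ‖X i k‖₊) (Finset.mem_univ i)
  calc ∑ j, |X i j| = ((∑ k, ‖X i k‖₊ : NNReal) : ℝ) := by
        push_cast
        exact Finset.sum_congr rfl fun j _ => (Real.norm_eq_abs _).symm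
    _ ≤ (‖X‖₊ : ℝ) := by exact_mod_cast h2
    _ = ‖X‖ := rfl

lemma aux_linfty_norm_map_ofReal (X : Matrix (Fin n) (Fin n) ℝ) :
    ‖X.map Complex.ofReal‖ = ‖X‖ := by
  have h : ‖X.map Complex.ofReal‖₊ = ‖X‖₊ := by
    rw [Matrix.linfty_opNNNorm_def, Matrix.linfty_opNNNorm_def]
    refine Finset.sup_congr rfl fun i _ => Finset.sum_congr rfl fun j _ => ?_
    simp [Matrix.map_apply]
  calc ‖X.map Complex.ofReal‖ = (‖X.map Complex.ofReal‖₊ : ℝ) := rfl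
    _ = (‖X‖₊ : ℝ) := by rw [h]
    _ = ‖X‖ := rfl

lemma aux_map_ofReal_pow (G : Matrix (Fin n) (Fin n) ℝ) (k : ℕ) :
    (G ^ k).map Complex.ofReal = (G.map Complex.ofReal) ^ k := by
  induction k with
  | zero =>
      simp only [pow_zero]
      exact Matrix.map_one _ (by simp) (by simp)
  | succ m ih =>
      rw [pow_succ, pow_succ, ← ih]
      exact Matrix.map_mul (f := Complex.ofRealHom)

lemma aux_exists_pow_rowsum_lt {G : Matrix (Fin n) (Fin n) ℝ} {t : ℝ} (ht : 0 < t)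
    (hρ : specRad G < t) : ∃ N : ℕ, 1 ≤ N ∧ ∀ i, ∑ j, |(G ^ N) i j| < t ^ N := by
  set a : Matrix (Fin n) (Fin n) ℂ := G.map Complex.ofReal with ha
  have hbdd : BddAbove ((fun μ : ℂ => ‖μ‖) '' spectrum ℂ a) :=
    ((spectrum.isCompact a).image continuous_norm).bddAbove
  have hsr : spectralRadius ℂ a ≤ ENNReal.ofReal (specRad G) := by
    rw [spectralRadius]
    refine iSup₂_le fun k hk => ?_
    have h1 : ‖k‖ ≤ specRad G := le_csSup hbdd ⟨k, hk, rfl⟩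
    calc (‖k‖₊ : ENNReal) = ENNReal.ofReal ‖k‖ := (ofReal_norm k).symm
      _ ≤ ENNReal.ofReal (specRad G) := ENNReal.ofReal_le_ofReal (by
          exact h1)
  have hlt : spectralRadius ℂ a < ENNReal.ofReal t :=
    lt_of_le_of_lt hsr ((ENNReal.ofReal_lt_ofReal_iff ht).mpr hρ)
  have hG := spectrum.pow_nnnorm_pow_one_div_tendsto_nhds_spectralRadius a
  have hev := hG.eventually_lt_const hlt
  obtain ⟨N, hN⟩ := (hev.and (eventually_ge_atTop 1)).exists
  obtain ⟨hNlt, hN1⟩ := hN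
  refine ⟨N, hN1, ?_⟩
  have hNpos : (0 : ℝ) < (N : ℝ) := by exact_mod_cast hN1
  have hpow : (‖a ^ N‖₊ : ENNReal) < (ENNReal.ofReal t) ^ N := by
    have h2 := ENNReal.rpow_lt_rpow hNlt hNpos
    rw [← ENNReal.rpow_mul, one_div_mul_cancel hNpos.ne', ENNReal.rpow_one,
      ENNReal.rpow_natCast] at h2
    exact h2
  have hfin : ‖a ^ N‖ < t ^ N := by
    have h3 : (‖a ^ N‖₊ : ENNReal) < ENNReal.ofReal (t ^ N) := by
      rw [ENNReal.ofReal_pow ht.le]; exact hpow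
    rw [← enorm_eq_nnnorm, ← ofReal_norm] at h3
    exact (ENNReal.ofReal_lt_ofReal_iff_of_nonneg (norm_nonneg _)).mp h3
  intro i
  calc ∑ j, |(G ^ N) i j| ≤ ‖G ^ N‖ := aux_linfty_rowsum_le_norm _ i
    _ = ‖(G ^ N).map Complex.ofReal‖ := (aux_linfty_norm_map_ofReal _).symm
    _ = ‖a ^ N‖ := by rw [aux_map_ofReal_pow]
    _ < t ^ N := hfin

end AuxNorm

lemma aux_mmat_of_semipos {C : Matrix (Fin n) (Fin n) ℝ} {x : Fin n → ℝ}
    (hZ : IsZmat C) (hx : ∀ i, 0 < x i) (hCx : ∀ i, 0 < (C *ᵥ x) i) : IsMmat C := by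
  classical
  have hdiag : ∀ i, 0 < C i i := by
    intro i
    have h1 : (C *ᵥ x) i = C i i * x i + ∑ j ∈ Finset.univ.erase i, C i j * x j := by
      rw [Matrix.mulVec, dotProduct, ← Finset.add_sum_erase _ _ (Finset.mem_univ i)]
    have h2 : ∑ j ∈ Finset.univ.erase i, C i j * x j ≤ 0 :=
      Finset.sum_nonpos fun j hj =>
        mul_nonpos_of_nonpos_of_nonneg (hZ i j (Finset.ne_of_mem_erase hj).symm) (hx j).le
    have h3 : 0 < C i i * x i := by
      have h4 := hCx i
      rw [h1] at h4
      linarith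
    rcases mul_pos_iff.mp h3 with ⟨h, _⟩ | ⟨_, h⟩
    · exact h
    · linarith [hx i]
  set d : Fin n → ℝ := fun i => C i i * x i with hd
  have hdpos : ∀ i, 0 < d i := fun i => mul_pos (hdiag i) (hx i)
  set J : Matrix (Fin n) (Fin n) ℝ :=
    Matrix.of (fun i j => if i = j then (0 : ℝ) else -(C i j * x j) / d i) with hJ
  have hJ0 : ∀ i j, 0 ≤ J i j := by
    intro i j
    rw [hJ]
    simp only [Matrix.of_apply]
    split
    · exact le_rfl
    · next h =>
        refine div_nonneg ?_ (hdpos i).le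
        have := hZ i j h
        nlinarith [(hx j).le]
  have hrow : ∀ i, ∑ j, J i j < 1 := by
    intro i
    have h1 : (C *ᵥ x) i = d i + ∑ j ∈ Finset.univ.erase i, C i j * x j := by
      rw [Matrix.mulVec, dotProduct, ← Finset.add_sum_erase _ _ (Finset.mem_univ i)]
    have h2 : ∑ j, J i j = (∑ j ∈ Finset.univ.erase i, -(C i j * x j)) / d i := by
      rw [← Finset.add_sum_erase _ _ (Finset.mem_univ i)]
      have hJii : J i i = 0 := by simp [hJ]
      rw [hJii, zero_add, Finset.sum_div]
      refine Finset.sum_congr rfl fun j hj => ?_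
      have hji : ¬ (i = j) := fun h => (Finset.ne_of_mem_erase hj) h.symm
      simp [hJ, hji]
    have h3 : ∑ j ∈ Finset.univ.erase i, -(C i j * x j) = d i - (C *ᵥ x) i := by
      rw [h1, Finset.sum_neg_distrib]
      ring
    rw [h2, h3, div_lt_one (hdpos i)]
    linarith [hCx i]
  obtain ⟨hWdet, hWinv0⟩ := aux_inv_one_sub_nonneg hJ0 hrow
  set W : Matrix (Fin n) (Fin n) ℝ := 1 - J with hW
  have hdne : ∀ i, d i ≠ 0 := fun i => (hdpos i).ne'
  have hxne : ∀ i, x i ≠ 0 := fun i => (hx i).ne'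
  have hfac : C = Matrix.diagonal d * W * Matrix.diagonal (fun i => (x i)⁻¹) := by
    ext i j
    rw [Matrix.mul_diagonal, Matrix.diagonal_mul]
    by_cases hij : i = j
    · subst hij
      have : W i i = 1 := by simp [hW, hJ, Matrix.sub_apply, Matrix.one_apply_eq]
      rw [this, mul_one]
      have hdi : d i = C i i * x i := rfl
      rw [hdi, mul_assoc, mul_inv_cancel₀ (hxne i), mul_one]
    · have : W i j = (C i j * x j) / d i := by
        simp [hW, hJ, Matrix.sub_apply, Matrix.one_apply_ne hij, hij, neg_div]
      rw [this]
      field_simp [hdne i, hxne j]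
  have hdetC : IsUnit C.det := by
    rw [hfac, Matrix.det_mul, Matrix.det_mul, Matrix.det_diagonal, Matrix.det_diagonal]
    refine isUnit_iff_ne_zero.mpr ?_
    have h1 : (∏ i, d i) ≠ 0 := Finset.prod_ne_zero_iff.mpr fun i _ => hdne i
    have h2 : (∏ i : Fin n, (x i)⁻¹) ≠ 0 :=
      Finset.prod_ne_zero_iff.mpr fun i _ => inv_ne_zero (hxne i)
    exact mul_ne_zero (mul_ne_zero h1 (isUnit_iff_ne_zero.mp hWdet)) h2
  have hEinv : (Matrix.diagonal (fun i => (x i)⁻¹))⁻¹ = Matrix.diagonal x := by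
    refine Matrix.inv_eq_right_inv ?_
    rw [Matrix.diagonal_mul_diagonal]
    convert Matrix.diagonal_one using 2
    exact funext fun i => inv_mul_cancel₀ (hxne i)
  have hDdinv : (Matrix.diagonal d)⁻¹ = Matrix.diagonal (fun i => (d i)⁻¹) := by
    refine Matrix.inv_eq_right_inv ?_
    rw [Matrix.diagonal_mul_diagonal]
    convert Matrix.diagonal_one using 2
    exact funext fun i => mul_inv_cancel₀ (hdne i)
  have hCinv : C⁻¹ = Matrix.diagonal x * (W⁻¹ * Matrix.diagonal (fun i => (d i)⁻¹)) := by
    rw [hfac, Matrix.mul_inv_rev, Matrix.mul_inv_rev, hEinv, hDdinv]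
  refine ⟨hZ, (Matrix.isUnit_iff_isUnit_det C).mpr hdetC, ?_⟩
  intro i j
  rw [hCinv, Matrix.diagonal_mul, Matrix.mul_diagonal]
  exact mul_nonneg (hx i).le (mul_nonneg (hWinv0 i j) (inv_nonneg.mpr (hdpos j).le))


lemma aux_scalar_diag (α β a o W f pq : ℝ) (hα : 0 < α) (ha : 0 < a) (ho : 0 < o)
    (hge : a * o ≤ W) (hpq : 0 ≤ pq) :
    2 * (1 ⊓ α) * (a * o) - 2 * (α ⊔ β) * pq ≤
      α * (|α⁻¹ * a * o| + |f| + W - (|α⁻¹ * ((1 - α) * a) * o + f| + |W - a * o| + 2 * pq)) := by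
  have hao : 0 < a * o := mul_pos ha ho
  have h1 : |α⁻¹ * a * o| = α⁻¹ * (a * o) := by
    rw [abs_of_pos (by positivity)]; ring
  have h3 : |α⁻¹ * ((1 - α) * a) * o + f| ≤ |1 - α| * (α⁻¹ * (a * o)) + |f| := by
    refine (abs_add_le _ _).trans ?_
    have h4 : α⁻¹ * ((1 - α) * a) * o = (1 - α) * (α⁻¹ * (a * o)) := by ring
    rw [h4, abs_mul, abs_of_pos (by positivity : (0:ℝ) < α⁻¹ * (a * o))]
  have h5 := mul_le_mul_of_nonneg_left h3 hα.le
  have h6 : α * (|1 - α| * (α⁻¹ * (a * o)) + |f|) = |1 - α| * (a * o) + α * |f| := by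
    field_simp
  rw [h6] at h5
  have h7 : α * (α⁻¹ * (a * o)) = a * o := by field_simp
  have hc : α ≤ α ⊔ β := le_max_left α β
  have h8 : 0 ≤ (α ⊔ β - α) * pq := mul_nonneg (by linarith) hpq
  rw [h1, abs_of_nonneg (by linarith : (0:ℝ) ≤ W - a * o)]
  rcases le_total 1 α with h | h
  · rw [min_eq_left h]
    rw [abs_of_nonpos (by linarith : (1:ℝ) - α ≤ 0)] at h5
    nlinarith [h5, h7, h8]
  · rw [min_eq_right h]
    rw [abs_of_nonneg (by linarith : (0:ℝ) ≤ 1 - α)] at h5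
    nlinarith [h5, h7, h8]

lemma aux_scalar_off (α β l u o pq : ℝ) (hα : 0 < α) (hβ : 0 ≤ β) (hlu : l = 0 ∨ u = 0)
    (ho : 0 < o) (hpq : 0 ≤ pq) :
    -(2 * (α ⊔ β) * (|(l + u) * o| + pq)) ≤
      α * (-|α⁻¹ * -(β * l) * o| + |(0:ℝ)| -
        (|α⁻¹ * ((α - β) * l + α * u) * o| + |(-l - u) * o| + 2 * pq)) := by
  have hc : α ≤ α ⊔ β := le_max_left α β
  have h8 : 0 ≤ (α ⊔ β - α) * pq := mul_nonneg (by linarith) hpq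
  rw [abs_zero]
  rcases hlu with h0 | h0
  · subst h0
    have e1 : |α⁻¹ * -(β * 0) * o| = 0 := by simp
    have e2 : |α⁻¹ * ((α - β) * 0 + α * u) * o| = α⁻¹ * α * (|u| * o) := by
      rw [show α⁻¹ * ((α - β) * 0 + α * u) * o = (α⁻¹ * α) * (u * o) by ring,
        abs_mul, abs_mul, abs_of_pos hα, abs_of_nonneg (inv_nonneg.mpr hα.le),
        abs_mul, abs_of_pos ho]
    have e3 : |(-0 - u) * o| = |u| * o := by
      rw [show (-0 - u) * o = -(u * o) by ring, abs_neg, abs_mul, abs_of_pos ho]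
    have e4 : |(0 + u) * o| = |u| * o := by
      rw [show (0 + u) * o = u * o by ring, abs_mul, abs_of_pos ho]
    rw [e1, e2, e3, e4]
    have h9 : α * (α⁻¹ * α * (|u| * o)) = α * (|u| * o) := by field_simp
    have h10 : 0 ≤ (α ⊔ β - α) * (|u| * o) :=
      mul_nonneg (by linarith) (mul_nonneg (abs_nonneg u) ho.le)
    nlinarith [h9, h8, h10]
  · subst h0
    have e1 : |α⁻¹ * -(β * l) * o| = α⁻¹ * (β * (|l| * o)) := by
      rw [show α⁻¹ * -(β * l) * o = -((α⁻¹ * β) * (l * o)) by ring, abs_neg, abs_mul, abs_mul,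
        abs_of_nonneg (inv_nonneg.mpr hα.le), abs_of_nonneg hβ, abs_mul, abs_of_pos ho]
      ring
    have e2 : |α⁻¹ * ((α - β) * l + α * 0) * o| = α⁻¹ * |α - β| * (|l| * o) := by
      rw [show α⁻¹ * ((α - β) * l + α * 0) * o = α⁻¹ * ((α - β) * (l * o)) by ring, abs_mul,
        abs_of_nonneg (inv_nonneg.mpr hα.le), abs_mul, abs_mul, abs_of_pos ho]
      ring
    have e3 : |(-l - 0) * o| = |l| * o := by
      rw [show (-l - 0) * o = -(l * o) by ring, abs_neg, abs_mul, abs_of_pos ho]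
    have e4 : |(l + 0) * o| = |l| * o := by
      rw [show (l + 0) * o = l * o by ring, abs_mul, abs_of_pos ho]
    rw [e1, e2, e3, e4]
    have hlo : 0 ≤ |l| * o := mul_nonneg (abs_nonneg l) ho.le
    have h9 : α * (α⁻¹ * (β * (|l| * o))) = β * (|l| * o) := by field_simp
    rcases le_total α β with h | h
    · rw [max_eq_right h, show |α - β| = β - α from by
        rw [abs_of_nonpos (by linarith : α - β ≤ 0)]; ring]
      have h10 : α * (α⁻¹ * (β - α) * (|l| * o)) = (β - α) * (|l| * o) := by field_simp
      have h11 : 0 ≤ (β - α) * pq := mul_nonneg (by linarith) hpq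
      nlinarith [h9, h10, h11, hlo]
    · rw [max_eq_left h, abs_of_nonneg (by linarith : (0:ℝ) ≤ α - β)]
      have h10 : α * (α⁻¹ * (α - β) * (|l| * o)) = (α - β) * (|l| * o) := by field_simp
      nlinarith [h9, h10, hlo]


theorem stmt11 (A D L U B M N φ Ω₁ Ω₂ Ψ : Matrix (Fin n) (Fin n) ℝ)
    (α β : ℝ) (hα : 0 < α) (hβ : 0 ≤ β)
    (hΩ₁ : PosDiag Ω₁) (hΩ₂ : PosDiag Ω₂) (hφ : φ.IsDiag)
    (hA : IsHplus A) (hAinv : IsUnit A)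
    (hD : D = Matrix.diagonal (fun i => A i i))
    (hL : ∀ i j : Fin n, i ≤ j → L i j = 0)
    (hU : ∀ i j : Fin n, j ≤ i → U i j = 0)
    (hAsplit : A = D - L - U) (hB : B = L + U)
    (hΩge : ∀ i j, (D * Ω₁) i j ≤ Ω₂ i j)
    (hΨ : ∀ i j, 0 ≤ Ψ i j)
    (hM : M = α⁻¹ • (D - β • L))
    (hN : N = α⁻¹ • ((1 - α) • D + (α - β) • L + α • U))
    (Hb Fb : Matrix (Fin n) (Fin n) ℝ)
    (hHb : Hb = compMat (M * Ω₁) + matAbs (φ * Ω₁) + Ω₂)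
    (hFb : Fb = matAbs (N * Ω₁ + φ * Ω₁) + matAbs (Ω₂ - A * Ω₁)
      + (2 : ℝ) • (matAbs A * Ψ * matAbs A⁻¹ * Ω₂)) :
    (∀ i j, ((2 * min 1 α) • (D * Ω₁)
        - (2 * max α β) • (matAbs (B * Ω₁) + matAbs A * Ψ * matAbs A⁻¹ * Ω₂)) i j
      ≤ (α • (Hb - Fb)) i j) ∧
    (max α β *
        specRad ((D * Ω₁)⁻¹ * (matAbs (B * Ω₁) + matAbs A * Ψ * matAbs A⁻¹ * Ω₂))
      < min 1 α → IsMmat (Hb - Fb)) := by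
  classical
  have hω : ∀ i, 0 < Ω₁ i i := hΩ₁.2
  have hw : ∀ i, 0 < Ω₂ i i := hΩ₂.2
  have habsA : ∀ i j, 0 ≤ matAbs A i j := fun i j => abs_nonneg _
  have habsAi : ∀ i j, 0 ≤ matAbs A⁻¹ i j := fun i j => abs_nonneg _
  have hP : ∀ i j, 0 ≤ (matAbs A * Ψ * matAbs A⁻¹) i j :=
    aux_mul_entries_nonneg (aux_mul_entries_nonneg habsA hΨ) habsAi
  have key : ∀ i j, ((2 * min 1 α) • (D * Ω₁)
        - (2 * max α β) • (matAbs (B * Ω₁) + matAbs A * Ψ * matAbs A⁻¹ * Ω₂)) i j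
      ≤ (α • (Hb - Fb)) i j := by
    intro i j
    have hAij : A i j = D i j - L i j - U i j := by rw [hAsplit]; simp
    have hBij : B i j = L i j + U i j := by rw [hB]; simp
    have hMij : M i j = α⁻¹ * (D i j - β * L i j) := by rw [hM]; simp
    have hNij : N i j = α⁻¹ * ((1 - α) * D i j + (α - β) * L i j + α * U i j) := by
      rw [hN]; simp
    have hPw : 0 ≤ (matAbs A * Ψ * matAbs A⁻¹) i j * Ω₂ j j :=
      mul_nonneg (hP i j) (hw j).le
    simp only [hHb, hFb, Matrix.sub_apply, Matrix.add_apply, Matrix.smul_apply, smul_eq_mul,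
      compMat, matAbs, Matrix.of_apply, aux_mul_isDiag_apply hΩ₁.1, aux_mul_isDiag_apply hΩ₂.1,
      hMij, hNij, hBij, hAij]
    by_cases hij : i = j
    · subst hij
      have hLii : L i i = 0 := hL i i le_rfl
      have hUii : U i i = 0 := hU i i le_rfl
      have hDii : D i i = A i i := by rw [hD, Matrix.diagonal_apply_eq]
      have hd : 0 < A i i := hA.2 i
      have hge : A i i * Ω₁ i i ≤ Ω₂ i i := by
        have := hΩge i i
        rwa [aux_mul_isDiag_apply hΩ₁.1, hDii] at this
      have hPw' := hPw
      simp only [matAbs] at hPw'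
      simp only [if_pos rfl, hLii, hUii, hDii, mul_zero, sub_zero, add_zero, zero_add,
        zero_mul, abs_zero, if_true]
      exact aux_scalar_diag α β (A i i) (Ω₁ i i) (Ω₂ i i) (φ i i * Ω₁ i i) _ hα hd (hω i)
        hge hPw'
    · have hD0 : D i j = 0 := by rw [hD, Matrix.diagonal_apply_ne _ hij]
      have hφ0 : φ i j = 0 := hφ hij
      have hΩ20 : Ω₂ i j = 0 := hΩ₂.1 hij
      have hPw' := hPw
      simp only [matAbs] at hPw'
      have hlu : L i j = 0 ∨ U i j = 0 := by
        rcases Ne.lt_or_gt hij with h | h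
        · exact Or.inl (hL i j h.le)
        · exact Or.inr (hU i j h.le)
      simp only [if_neg hij, hD0, hφ0, hΩ20, mul_zero, zero_mul, sub_zero, add_zero, zero_add,
        zero_sub, abs_neg, zero_mul]
      exact aux_scalar_off α β (L i j) (U i j) (Ω₁ j j) _ hα hβ hlu (hω j) hPw'
  refine ⟨key, ?_⟩
  intro hspec
  set Tm := matAbs (B * Ω₁) + matAbs A * Ψ * matAbs A⁻¹ * Ω₂ with hTm
  have hT0 : ∀ i j, 0 ≤ Tm i j := by
    intro i j
    rw [hTm, Matrix.add_apply, aux_mul_isDiag_apply hΩ₂.1]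
    exact add_nonneg (abs_nonneg _) (mul_nonneg (hP i j) (hw j).le)
  set s : Fin n → ℝ := fun i => A i i * Ω₁ i i with hsdef
  have hs : ∀ i, 0 < s i := fun i => mul_pos (hA.2 i) (hω i)
  have hSdiag : D * Ω₁ = Matrix.diagonal s := by
    ext i j
    rw [aux_mul_isDiag_apply hΩ₁.1, hD]
    by_cases hij : i = j
    · subst hij; rw [Matrix.diagonal_apply_eq, Matrix.diagonal_apply_eq]
    · rw [Matrix.diagonal_apply_ne _ hij, Matrix.diagonal_apply_ne _ hij, zero_mul]
  have hSinv : (D * Ω₁)⁻¹ = Matrix.diagonal (fun i => (s i)⁻¹) := by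
    rw [hSdiag]
    refine Matrix.inv_eq_right_inv ?_
    rw [Matrix.diagonal_mul_diagonal]
    convert Matrix.diagonal_one using 2
    exact funext fun i => mul_inv_cancel₀ (hs i).ne'
  have hm0 : 0 < min 1 α := lt_min one_pos hα
  have hc0 : 0 < max α β := lt_of_lt_of_le hα (le_max_left α β)
  set G0 : Matrix (Fin n) (Fin n) ℝ := (D * Ω₁)⁻¹ * Tm with hG0def
  have hG00 : ∀ i j, 0 ≤ G0 i j := by
    intro i j
    rw [hG0def, hSinv, Matrix.diagonal_mul]
    exact mul_nonneg (inv_nonneg.mpr (hs i).le) (hT0 i j)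
  have hsrlt : specRad G0 < min 1 α / max α β := by
    rw [lt_div_iff₀ hc0, mul_comm]
    exact hspec
  obtain ⟨N, hN1, hrowlt⟩ := aux_exists_pow_rowsum_lt (div_pos hm0 hc0) hsrlt
  set G : Matrix (Fin n) (Fin n) ℝ := (max α β / min 1 α) • G0 with hGdef
  have hGe : ∀ i j, 0 ≤ G i j := by
    intro i j
    rw [hGdef, Matrix.smul_apply, smul_eq_mul]
    exact mul_nonneg (by positivity) (hG00 i j)
  have hrowG : ∀ i, ∑ j, (G ^ N) i j < 1 := by
    intro i
    have hpow : G ^ N = ((max α β / min 1 α) ^ N) • G0 ^ N := by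
      rw [hGdef]; exact smul_pow _ _ N
    have h1 : ∑ j, (G ^ N) i j = (max α β / min 1 α) ^ N * ∑ j, (G0 ^ N) i j := by
      rw [hpow]
      simp only [Matrix.smul_apply, smul_eq_mul]
      rw [Finset.mul_sum]
    have h2 : ∑ j, (G0 ^ N) i j < (min 1 α / max α β) ^ N := by
      have h3 := hrowlt i
      have h4 : ∑ j, |(G0 ^ N) i j| = ∑ j, (G0 ^ N) i j :=
        Finset.sum_congr rfl fun j _ => abs_of_nonneg (aux_pow_entries_nonneg hG00 N i j)
      rwa [h4] at h3
    have h5 : (0:ℝ) < (max α β / min 1 α) ^ N := by positivity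
    calc ∑ j, (G ^ N) i j
        = (max α β / min 1 α) ^ N * ∑ j, (G0 ^ N) i j := h1
      _ < (max α β / min 1 α) ^ N * (min 1 α / max α β) ^ N := by
          exact mul_lt_mul_of_pos_left h2 h5
      _ = 1 := by
          rw [← mul_pow, show (max α β / min 1 α) * (min 1 α / max α β) = 1 from by
            field_simp]
          exact one_pow N
  set x : Fin n → ℝ := (∑ k ∈ Finset.range N, G ^ k) *ᵥ (fun _ => (1:ℝ)) with hxdef
  have hmve : ∀ (Y : Matrix (Fin n) (Fin n) ℝ) i, (Y *ᵥ fun _ => (1:ℝ)) i = ∑ j, Y i j := by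
    intro Y i
    simp [Matrix.mulVec, dotProduct]
  have hx_sum : ∀ i, x i = ∑ k ∈ Finset.range N, ∑ j, (G ^ k) i j := by
    intro i
    rw [hxdef, hmve]
    simp only [Matrix.sum_apply]
    exact Finset.sum_comm
  have hx1 : ∀ i, 1 ≤ x i := by
    intro i
    rw [hx_sum i]
    have h0N : (0:ℕ) ∈ Finset.range N := Finset.mem_range.mpr (by omega)
    rw [← Finset.add_sum_erase _ _ h0N]
    have h1 : ∑ j, ((G:Matrix (Fin n) (Fin n) ℝ) ^ 0) i j = 1 := by
      simp [Matrix.one_apply]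
    rw [h1]
    have h2 : 0 ≤ ∑ k ∈ (Finset.range N).erase 0, ∑ j, (G ^ k) i j :=
      Finset.sum_nonneg fun k _ =>
        Finset.sum_nonneg fun j _ => aux_pow_entries_nonneg hGe k i j
    linarith
  have hxpos : ∀ i, 0 < x i := fun i => lt_of_lt_of_le one_pos (hx1 i)
  have hGx : ∀ i, (G *ᵥ x) i < x i := by
    have h2 := Finset.sum_range_succ' (fun k => G ^ k) N
    have h3 := Finset.sum_range_succ (fun k => G ^ k) N
    have heq : ∑ k ∈ Finset.range N, G ^ (k + 1)
        = ∑ k ∈ Finset.range N, G ^ k + G ^ N - G ^ 0 :=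
      eq_sub_of_add_eq (h2.symm.trans h3)
    have hid : G * (∑ k ∈ Finset.range N, G ^ k)
        = (∑ k ∈ Finset.range N, G ^ k) - 1 + G ^ N := by
      rw [Finset.mul_sum]
      have h1 : ∀ k ∈ Finset.range N, G * G ^ k = G ^ (k + 1) :=
        fun k _ => (pow_succ' G k).symm
      rw [Finset.sum_congr rfl h1, heq, pow_zero]
      abel
    intro i
    have h4 : G *ᵥ x = x - (fun _ => (1:ℝ)) + (G ^ N) *ᵥ (fun _ => (1:ℝ)) := by
      rw [hxdef, Matrix.mulVec_mulVec, hid, Matrix.add_mulVec, Matrix.sub_mulVec,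
        Matrix.one_mulVec]
    rw [h4]
    have h5 : ((G ^ N) *ᵥ fun _ => (1:ℝ)) i < 1 := by
      rw [hmve]; exact hrowG i
    simp only [Pi.add_apply, Pi.sub_apply]
    linarith
  have hTx : ∀ i, max α β * (Tm *ᵥ x) i < min 1 α * (s i * x i) := by
    intro i
    have h1 : (G *ᵥ x) i = (max α β / min 1 α) * ((s i)⁻¹ * (Tm *ᵥ x) i) := by
      rw [hGdef, Matrix.smul_mulVec, Pi.smul_apply, smul_eq_mul, hG0def, hSinv,
        ← Matrix.mulVec_mulVec, Matrix.mulVec_diagonal]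
    have h2 := hGx i
    rw [h1] at h2
    have h3 := mul_lt_mul_of_pos_left h2 (mul_pos hm0 (hs i))
    calc max α β * (Tm *ᵥ x) i
        = min 1 α * s i * (max α β / min 1 α * ((s i)⁻¹ * (Tm *ᵥ x) i)) := by
          symm
          rw [div_eq_mul_inv, show min 1 α * s i * (max α β * (min 1 α)⁻¹ * ((s i)⁻¹
              * (Tm *ᵥ x) i)) = (min 1 α * (min 1 α)⁻¹) * (s i * (s i)⁻¹)
              * (max α β * (Tm *ᵥ x) i) from by ring,
            mul_inv_cancel₀ hm0.ne', mul_inv_cancel₀ (hs i).ne', one_mul, one_mul]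
      _ < min 1 α * s i * x i := h3
      _ = min 1 α * (s i * x i) := by ring
  have hCx : ∀ i, 0 < ((Hb - Fb) *ᵥ x) i := by
    intro i
    have h7 : (((2 * min 1 α) • (D * Ω₁) - (2 * max α β) • Tm) *ᵥ x) i
        ≤ ((α • (Hb - Fb)) *ᵥ x) i :=
      aux_mulVec_mono (fun i j => key i j) (fun j => (hxpos j).le) i
    have h8 : (((2 * min 1 α) • (D * Ω₁) - (2 * max α β) • Tm) *ᵥ x) i
        = 2 * min 1 α * (s i * x i) - 2 * max α β * (Tm *ᵥ x) i := by
      rw [Matrix.sub_mulVec, Pi.sub_apply, Matrix.smul_mulVec,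
        Matrix.smul_mulVec, Pi.smul_apply, Pi.smul_apply, smul_eq_mul, smul_eq_mul,
        hSdiag, Matrix.mulVec_diagonal]
    have h9 : ((α • (Hb - Fb)) *ᵥ x) i = α * ((Hb - Fb) *ᵥ x) i := by
      rw [Matrix.smul_mulVec, Pi.smul_apply, smul_eq_mul]
    have h10 : 0 < α * ((Hb - Fb) *ᵥ x) i := by
      rw [← h9]
      refine lt_of_lt_of_le ?_ h7
      rw [h8]
      linarith [hTx i]
    rcases mul_pos_iff.mp h10 with ⟨_, h⟩ | ⟨h, _⟩
    · exact h
    · linarith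
  have hZ : IsZmat (Hb - Fb) := by
    intro i j hij
    have h1 : (φ * Ω₁) i j = 0 := by
      rw [aux_mul_isDiag_apply hΩ₁.1, hφ hij, zero_mul]
    have h2 : Hb i j = -|(M * Ω₁) i j| := by
      rw [hHb]
      simp [Matrix.add_apply, compMat, matAbs, if_neg hij, h1, hΩ₂.1 hij]
    have h3 : 0 ≤ Fb i j := by
      rw [hFb]
      simp only [Matrix.add_apply, Matrix.smul_apply, matAbs, Matrix.of_apply, smul_eq_mul]
      have h4 : 0 ≤ (matAbs A * Ψ * matAbs A⁻¹ * Ω₂) i j := by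
        rw [aux_mul_isDiag_apply hΩ₂.1]
        exact mul_nonneg (hP i j) (hw j).le
      simp only [matAbs] at h4
      positivity
    rw [Matrix.sub_apply, h2]
    have := abs_nonneg ((M * Ω₁) i j)
    linarith
  exact aux_mmat_of_semipos hZ hxpos hCx
end
end

section
/- Let A ∈ ℝ^{n×n} be an invertible H₊-matrix with diagonal part D, A = (M + φ) − (N + φ) a splitting with φ diagonal such that Ā := ⟨M + φ⟩ − |N + φ| satisfies Ā ≤ ⟨A⟩ entrywise, and let Ω₁, Ω₂ be positive diagonal matrices with Ω₂ ≥ D_{Ω₁}, Ψ ≥ 0, and G := |A|Ψ|A⁻¹|Ω₂. Then |Ω₂ − A_{Ω₁}| = Ω₂ − ⟨A_{Ω₁}⟩ and, entrywise, Ā_{Ω₁} + Ω₂ − |Ω₂ − A_{Ω₁}| − 2G ≥ 2(Ā_{Ω₁} − G). -/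
open Matrix Filter Topology

noncomputable section

variable {n : ℕ}

theorem stmt12 (A D M N φ Ω₁ Ω₂ Ψ Ab G : Matrix (Fin n) (Fin n) ℝ)
    (hA : IsHplus A) (hAinv : IsUnit A)
    (hD : D = Matrix.diagonal (fun i => A i i))
    (hφ : φ.IsDiag)
    (hsplit : A = (M + φ) - (N + φ))
    (hAb : Ab = compMat (M + φ) - matAbs (N + φ))
    (hAble : ∀ i j, Ab i j ≤ compMat A i j)
    (hΩ₁ : PosDiag Ω₁) (hΩ₂ : PosDiag Ω₂)
    (hΩge : ∀ i j, (D * Ω₁) i j ≤ Ω₂ i j)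
    (hΨ : ∀ i j, 0 ≤ Ψ i j)
    (hG : G = matAbs A * Ψ * matAbs A⁻¹ * Ω₂) :
    matAbs (Ω₂ - A * Ω₁) = Ω₂ - compMat (A * Ω₁) ∧
    ∀ i j, ((2 : ℝ) • (Ab * Ω₁ - G)) i j ≤
      (Ab * Ω₁ + Ω₂ - matAbs (Ω₂ - A * Ω₁) - (2 : ℝ) • G) i j := by
  obtain ⟨hΩ₁d, hΩ₁pos⟩ := hΩ₁
  obtain ⟨hΩ₂d, hΩ₂pos⟩ := hΩ₂
  have hmul : ∀ (X : Matrix (Fin n) (Fin n) ℝ) i j, (X * Ω₁) i j = X i j * Ω₁ j j := by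
    intro X i j
    conv_lhs => rw [← hΩ₁d.diagonal_diag]
    simp [Matrix.mul_diagonal, Matrix.diag]
  have hdiag : ∀ i, A i i * Ω₁ i i ≤ Ω₂ i i := by
    intro i
    have := hΩge i i
    rwa [hD, hmul, Matrix.diagonal_apply_eq] at this
  have hApos := hA.2
  have key : matAbs (Ω₂ - A * Ω₁) = Ω₂ - compMat (A * Ω₁) := by
    ext i j
    by_cases hij : i = j
    · subst hij
      have h1 : 0 < A i i * Ω₁ i i := mul_pos (hApos i) (hΩ₁pos i)
      simp only [matAbs, compMat, Matrix.sub_apply, Matrix.of_apply, if_pos rfl, hmul]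
      rw [abs_of_nonneg (by linarith [hdiag i]), abs_of_pos h1]
      simp
    · have h0 : Ω₂ i j = 0 := hΩ₂d hij
      simp only [matAbs, compMat, Matrix.sub_apply, Matrix.of_apply, if_neg hij, hmul, h0]
      rw [zero_sub, abs_neg, sub_neg_eq_add, zero_add]
  refine ⟨key, fun i j => ?_⟩
  rw [key]
  have hcomp : (Ab * Ω₁) i j ≤ compMat (A * Ω₁) i j := by
    have hle := hAble i j
    have hpos := (hΩ₁pos j).le
    by_cases hij : i = j
    · subst hij
      simp only [compMat, Matrix.of_apply, if_pos rfl] at hle ⊢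
      rw [hmul, hmul, abs_mul, abs_of_nonneg hpos]
      exact mul_le_mul_of_nonneg_right hle hpos
    · simp only [compMat, Matrix.of_apply, if_neg hij] at hle ⊢
      rw [hmul, hmul, abs_mul, abs_of_nonneg hpos]
      nlinarith [mul_le_mul_of_nonneg_right hle hpos]
  simp only [Matrix.smul_apply, Matrix.sub_apply, Matrix.add_apply, smul_eq_mul]
  linarith

end
end

section
/- Let A ∈ ℝ^{n×n} be an H₊-matrix with diagonal part D, φ a diagonal matrix, and A = (M + φ) − (N + φ) an H-splitting, i.e. Ā := ⟨M + φ⟩ − |N + φ| is a nonsingular M-matrix, with the diagonal entries of M + φ positive. Let Ψ ≥ 0 satisfy |ζ(u) − ζ(v)| ≤ Ψ|u − v| entrywise for all u, v, and let V be a positive diagonal matrix such that ĀV is strictly diagonally dominant. Assume either (1) Ω₂ ≥ D_{Ω₁} and (⟨M_{Ω₁} + φ_{Ω₁}⟩ − |N_{Ω₁} + φ_{Ω₁}| − |A|Ψ|A⁻¹|Ω₂)Ve > 0, or (2) 0 < Ω₂ ≤ D_{Ω₁} and (Ω₂ − D_{Ω₁} + ⟨M_{Ω₁} + φ_{Ω₁}⟩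 − |N_{Ω₁} + φ_{Ω₁}| − |A|Ψ|A⁻¹|Ω₂)Ve > 0, where e = (1,…,1)ᵀ. Then ρ(L̄) < 1 for L̄ = (Ω₂ + ⟨M_{Ω₁}⟩ + |φ_{Ω₁}|)⁻¹(|N_{Ω₁} + φ_{Ω₁}| + |Ω₂ − A_{Ω₁}| + 2|A|Ψ|A⁻¹|Ω₂), and for every initial vector x^(0) the sequence z^(k) generated by Method 3.1 converges to the solution z* of ICP(q,A,ζ) corresponding to the unique fixed point x*. -/
open Matrix Filter Topology

noncomputable section

variable {n : ℕ}

namespace Aux15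

lemma matAbs_apply (A : Matrix (Fin n) (Fin n) ℝ) (i j) : matAbs A i j = |A i j| := rfl

lemma compMat_apply (A : Matrix (Fin n) (Fin n) ℝ) (i j) :
    compMat A i j = if i = j then |A i j| else -|A i j| := rfl

lemma isDiag_mulVec {Ω : Matrix (Fin n) (Fin n) ℝ} (hΩ : Ω.IsDiag) (x : Fin n → ℝ) (i : Fin n) :
    (Ω *ᵥ x) i = Ω i i * x i := by
  simp only [Matrix.mulVec, dotProduct]
  rw [Finset.sum_eq_single i]
  · intro b _ hb
    rw [hΩ (Ne.symm hb), zero_mul]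
  · intro h; exact absurd (Finset.mem_univ i) h

lemma mul_isDiag_apply {Ω : Matrix (Fin n) (Fin n) ℝ} (hΩ : Ω.IsDiag)
    (X : Matrix (Fin n) (Fin n) ℝ) (i j : Fin n) : (X * Ω) i j = X i j * Ω j j := by
  rw [Matrix.mul_apply, Finset.sum_eq_single j]
  · intro b _ hb
    rw [hΩ hb, mul_zero]
  · intro h; exact absurd (Finset.mem_univ j) h

lemma abs_mulVec_le (P : Matrix (Fin n) (Fin n) ℝ) {a b : Fin n → ℝ}
    (hab : ∀ j, |a j| ≤ b j) (i : Fin n) : |(P *ᵥ a) i| ≤ (matAbs P *ᵥ b) i := by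
  simp only [Matrix.mulVec, dotProduct, matAbs_apply]
  calc |∑ j, P i j * a j| ≤ ∑ j, |P i j * a j| := Finset.abs_sum_le_sum_abs _ _
    _ ≤ ∑ j, |P i j| * b j := by
        refine Finset.sum_le_sum fun j _ => ?_
        rw [abs_mul]
        exact mul_le_mul_of_nonneg_left (hab j) (abs_nonneg _)

lemma mulVec_mono_vec {P : Matrix (Fin n) (Fin n) ℝ} (hP : ∀ i j, 0 ≤ P i j)
    {a b : Fin n → ℝ} (h : ∀ j, a j ≤ b j) (i : Fin n) : (P *ᵥ a) i ≤ (P *ᵥ b) i := by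
  simp only [Matrix.mulVec, dotProduct]
  exact Finset.sum_le_sum fun j _ => mul_le_mul_of_nonneg_left (h j) (hP i j)

lemma mulVec_mono_mat {P Q : Matrix (Fin n) (Fin n) ℝ} (h : ∀ i j, P i j ≤ Q i j)
    {w : Fin n → ℝ} (hw : ∀ j, 0 ≤ w j) (i : Fin n) : (P *ᵥ w) i ≤ (Q *ᵥ w) i := by
  simp only [Matrix.mulVec, dotProduct]
  exact Finset.sum_le_sum fun j _ => mul_le_mul_of_nonneg_right (h i j) (hw j)

lemma mulVec_nonneg {P : Matrix (Fin n) (Fin n) ℝ} (hP : ∀ i j, 0 ≤ P i j)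
    {w : Fin n → ℝ} (hw : ∀ j, 0 ≤ w j) (i : Fin n) : 0 ≤ (P *ᵥ w) i := by
  have := mulVec_mono_vec hP (a := fun _ => 0) (by simpa using hw) i
  simpa [Matrix.mulVec, dotProduct] using this

lemma mulVec_scalar (P : Matrix (Fin n) (Fin n) ℝ) (c : ℝ) (g : Fin n → ℝ) (i : Fin n) :
    (P *ᵥ fun j => c * g j) i = c * (P *ᵥ g) i := by
  simp only [Matrix.mulVec, dotProduct, Finset.mul_sum]
  exact Finset.sum_congr rfl fun j _ => by ring

lemma mulVec_scalar_vec (P : Matrix (Fin n) (Fin n) ℝ) (c : ℝ) (g : Fin n → ℝ) :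
    (P *ᵥ fun j => c * g j) = fun i => c * (P *ᵥ g) i :=
  funext fun i => mulVec_scalar P c g i

lemma mul_entry_nonneg {P Q : Matrix (Fin n) (Fin n) ℝ} (hP : ∀ i j, 0 ≤ P i j)
    (hQ : ∀ i j, 0 ≤ Q i j) (i j : Fin n) : 0 ≤ (P * Q) i j := by
  rw [Matrix.mul_apply]
  exact Finset.sum_nonneg fun k _ => mul_nonneg (hP i k) (hQ k j)

lemma key_lower (B : Matrix (Fin n) (Fin n) ℝ) (v x : Fin n → ℝ) (i : Fin n)
    (hv : ∀ j, 0 ≤ v j)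
    (hi : ∀ j, |x j| * v i ≤ |x i| * v j) :
    |x i| * (compMat B *ᵥ v) i ≤ |(B *ᵥ x) i| * v i := by
  classical
  set er := Finset.univ.erase i with her
  set S1 := ∑ j ∈ er, |B i j| * v j with hS1
  set S2 := ∑ j ∈ er, |B i j| * |x j| with hS2
  have hsplit1 : (compMat B *ᵥ v) i = |B i i| * v i - S1 := by
    have : (compMat B *ᵥ v) i = ∑ j, compMat B i j * v j := rfl
    rw [this, ← Finset.sum_erase_add _ _ (Finset.mem_univ i)]
    have e2 : compMat B i i * v i = |B i i| * v i := by
      rw [compMat_apply, if_pos rfl]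
    have e1 : ∑ j ∈ er, compMat B i j * v j = ∑ j ∈ er, -(|B i j| * v j) := by
      refine Finset.sum_congr rfl fun j hj => ?_
      rw [compMat_apply, if_neg (fun h => (Finset.ne_of_mem_erase hj) h.symm)]
      ring
    rw [e1, e2, Finset.sum_neg_distrib]
    ring
  have hsplit2 : (B *ᵥ x) i = B i i * x i + ∑ j ∈ er, B i j * x j := by
    have : (B *ᵥ x) i = ∑ j, B i j * x j := rfl
    rw [this, ← Finset.sum_erase_add _ _ (Finset.mem_univ i)]
    ring
  have habs : |B i i| * |x i| - S2 ≤ |(B *ᵥ x) i| := by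
    rw [hsplit2]
    set S := ∑ j ∈ er, B i j * x j with hS
    have h1 : |B i i * x i| - |S| ≤ |B i i * x i + S| := by
      have := abs_sub_abs_le_abs_sub (B i i * x i) (-S)
      rw [abs_neg, sub_neg_eq_add] at this
      exact this
    have h2 : |S| ≤ S2 := by
      refine (Finset.abs_sum_le_sum_abs _ _).trans (le_of_eq ?_)
      exact Finset.sum_congr rfl fun j _ => abs_mul _ _
    rw [abs_mul] at h1
    linarith
  have hterm : ∀ j ∈ er, |B i j| * |x j| * v i ≤ |x i| * (|B i j| * v j) := by
    intro j _
    have h := mul_le_mul_of_nonneg_left (hi j) (abs_nonneg (B i j))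
    nlinarith [abs_nonneg (B i j)]
  have hS : S2 * v i ≤ |x i| * S1 := by
    calc S2 * v i = ∑ j ∈ er, |B i j| * |x j| * v i := by rw [hS2, Finset.sum_mul]
      _ ≤ ∑ j ∈ er, |x i| * (|B i j| * v j) := Finset.sum_le_sum hterm
      _ = |x i| * S1 := by rw [hS1, Finset.mul_sum]
  rw [hsplit1]
  nlinarith [mul_le_mul_of_nonneg_right habs (hv i)]

lemma key_lower_c (B : Matrix (Fin n) (Fin n) ℝ) (v : Fin n → ℝ) (u : Fin n → ℂ) (i : Fin n)
    (hv : ∀ j, 0 ≤ v j)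
    (hi : ∀ j, ‖u j‖ * v i ≤ ‖u i‖ * v j) :
    ‖u i‖ * (compMat B *ᵥ v) i
      ≤ ‖(B.map (Complex.ofReal) *ᵥ u) i‖ * v i := by
  classical
  set er := Finset.univ.erase i with her
  set S1 := ∑ j ∈ er, |B i j| * v j with hS1
  set S2 := ∑ j ∈ er, |B i j| * ‖u j‖ with hS2
  have hsplit1 : (compMat B *ᵥ v) i = |B i i| * v i - S1 := by
    have : (compMat B *ᵥ v) i = ∑ j, compMat B i j * v j := rfl
    rw [this, ← Finset.sum_erase_add _ _ (Finset.mem_univ i)]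
    have e2 : compMat B i i * v i = |B i i| * v i := by
      rw [compMat_apply, if_pos rfl]
    have e1 : ∑ j ∈ er, compMat B i j * v j = ∑ j ∈ er, -(|B i j| * v j) := by
      refine Finset.sum_congr rfl fun j hj => ?_
      rw [compMat_apply, if_neg (fun h => (Finset.ne_of_mem_erase hj) h.symm)]
      ring
    rw [e1, e2, Finset.sum_neg_distrib]
    ring
  have hsplit2 : (B.map (Complex.ofReal) *ᵥ u) i
      = (B i i : ℂ) * u i + ∑ j ∈ er, (B i j : ℂ) * u j := by
    have : (B.map (Complex.ofReal) *ᵥ u) i = ∑ j, (B i j : ℂ) * u j := rfl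
    rw [this, ← Finset.sum_erase_add _ _ (Finset.mem_univ i)]
    ring
  have habs : |B i i| * ‖u i‖ - S2
      ≤ ‖(B.map (Complex.ofReal) *ᵥ u) i‖ := by
    rw [hsplit2]
    set S := ∑ j ∈ er, (B i j : ℂ) * u j with hS
    have h1 : ‖(B i i : ℂ) * u i‖ - ‖S‖
        ≤ ‖(B i i : ℂ) * u i + S‖ := by
      have h := norm_add_le ((B i i : ℂ) * u i + S) (-S)
      simp only [add_neg_cancel_right, norm_neg] at h
      linarith
    have h2 : ‖S‖ ≤ S2 := by
      refine (norm_sum_le _ _).trans (le_of_eq ?_)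
      refine Finset.sum_congr rfl fun j _ => ?_
      rw [norm_mul, Complex.norm_real, Real.norm_eq_abs]
    rw [norm_mul, Complex.norm_real, Real.norm_eq_abs] at h1
    linarith
  have hterm : ∀ j ∈ er, |B i j| * ‖u j‖ * v i
      ≤ ‖u i‖ * (|B i j| * v j) := by
    intro j _
    have h := mul_le_mul_of_nonneg_left (hi j) (abs_nonneg (B i j))
    nlinarith [abs_nonneg (B i j)]
  have hS : S2 * v i ≤ ‖u i‖ * S1 := by
    calc S2 * v i = ∑ j ∈ er, |B i j| * ‖u j‖ * v i := by
          rw [hS2, Finset.sum_mul]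
      _ ≤ ∑ j ∈ er, ‖u i‖ * (|B i j| * v j) := Finset.sum_le_sum hterm
      _ = ‖u i‖ * S1 := by rw [hS1, Finset.mul_sum]
  rw [hsplit1]
  nlinarith [mul_le_mul_of_nonneg_right habs (hv i)]

lemma key_upper_c (C : Matrix (Fin n) (Fin n) ℝ) (hC : ∀ i j, 0 ≤ C i j)
    (v : Fin n → ℝ) (u : Fin n → ℂ) (i : Fin n) (hv : ∀ j, 0 ≤ v j)
    (hi : ∀ j, ‖u j‖ * v i ≤ ‖u i‖ * v j) :
    ‖(C.map (Complex.ofReal) *ᵥ u) i‖ * v i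
      ≤ ‖u i‖ * (C *ᵥ v) i := by
  have h1 : ‖(C.map (Complex.ofReal) *ᵥ u) i‖
      ≤ ∑ j, C i j * ‖u j‖ := by
    have : (C.map (Complex.ofReal) *ᵥ u) i = ∑ j, (C i j : ℂ) * u j := rfl
    rw [this]
    refine (norm_sum_le _ _).trans (le_of_eq ?_)
    refine Finset.sum_congr rfl fun j _ => ?_
    rw [norm_mul, Complex.norm_real, Real.norm_eq_abs, abs_of_nonneg (hC i j)]
  have h2 : (∑ j, C i j * ‖u j‖) * v i ≤ ‖u i‖ * (C *ᵥ v) i := by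
    have : (C *ᵥ v) i = ∑ j, C i j * v j := rfl
    rw [this, Finset.sum_mul, Finset.mul_sum]
    refine Finset.sum_le_sum fun j _ => ?_
    have h := mul_le_mul_of_nonneg_left (hi j) (hC i j)
    nlinarith [hC i j]
  calc ‖(C.map (Complex.ofReal) *ᵥ u) i‖ * v i
      ≤ (∑ j, C i j * ‖u j‖) * v i :=
        mul_le_mul_of_nonneg_right h1 (hv i)
    _ ≤ _ := h2

lemma exists_max_ratio {v : Fin n → ℝ} (hv : ∀ j, 0 < v j) (x : Fin n → ℝ) (hx : x ≠ 0) :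
    ∃ i, 0 < |x i| ∧ ∀ j, |x j| * v i ≤ |x i| * v j := by
  have hne : (Finset.univ : Finset (Fin n)).Nonempty := by
    obtain ⟨j, _⟩ := Function.ne_iff.mp hx
    exact ⟨j, Finset.mem_univ j⟩
  obtain ⟨i, _, hi⟩ := Finset.exists_max_image Finset.univ (fun j => |x j| / v j) hne
  refine ⟨i, ?_, ?_⟩
  · obtain ⟨j, hj⟩ := Function.ne_iff.mp hx
    have h1 : |x j| / v j ≤ |x i| / v i := hi j (Finset.mem_univ j)
    have h2 : 0 < |x j| / v j := div_pos (abs_pos.mpr hj) (hv j)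
    have h3 := h2.trans_le h1
    rcases div_pos_iff.mp h3 with ⟨h, _⟩ | ⟨_, h⟩
    · exact h
    · exact absurd (hv i) (not_lt.mpr h.le)
  · intro j
    exact (div_le_div_iff₀ (hv j) (hv i)).mp (hi j (Finset.mem_univ j))

lemma exists_max_ratio_c {v : Fin n → ℝ} (hv : ∀ j, 0 < v j) (u : Fin n → ℂ) (hu : u ≠ 0) :
    ∃ i, 0 < ‖u i‖ ∧
      ∀ j, ‖u j‖ * v i ≤ ‖u i‖ * v j := by
  have hne : (Finset.univ : Finset (Fin n)).Nonempty := by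
    obtain ⟨j, _⟩ := Function.ne_iff.mp hu
    exact ⟨j, Finset.mem_univ j⟩
  obtain ⟨i, _, hi⟩ := Finset.exists_max_image Finset.univ
    (fun j => ‖u j‖ / v j) hne
  refine ⟨i, ?_, ?_⟩
  · obtain ⟨j, hj⟩ := Function.ne_iff.mp hu
    have h1 : ‖u j‖ / v j ≤ ‖u i‖ / v i := hi j (Finset.mem_univ j)
    have h2 : 0 < ‖u j‖ / v j := div_pos (norm_pos_iff.mpr hj) (hv j)
    have h3 := h2.trans_le h1
    rcases div_pos_iff.mp h3 with ⟨h, _⟩ | ⟨_, h⟩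
    · exact h
    · exact absurd (hv i) (not_lt.mpr h.le)
  · intro j
    exact (div_le_div_iff₀ (hv j) (hv i)).mp (hi j (Finset.mem_univ j))

lemma isUnit_of_compMat_pos (B : Matrix (Fin n) (Fin n) ℝ) (v : Fin n → ℝ)
    (hv : ∀ j, 0 < v j) (h : ∀ i, 0 < (compMat B *ᵥ v) i) : IsUnit B := by
  rw [Matrix.isUnit_iff_isUnit_det, isUnit_iff_ne_zero]
  intro hdet
  obtain ⟨x, hx0, hBx⟩ := (Matrix.exists_mulVec_eq_zero_iff).mpr hdet
  obtain ⟨i, hxi, hi⟩ := exists_max_ratio hv x hx0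
  have := key_lower B v x i (fun j => (hv j).le) hi
  rw [hBx] at this
  simp only [Pi.zero_apply, abs_zero, zero_mul] at this
  nlinarith [h i, hv i]

lemma map_mul_ofReal (P Q : Matrix (Fin n) (Fin n) ℝ) :
    (P * Q).map Complex.ofReal = P.map Complex.ofReal * Q.map Complex.ofReal := by
  ext i j
  simp [Matrix.mul_apply, Matrix.map_apply]

lemma spec_bound (W C : Matrix (Fin n) (Fin n) ℝ) (v : Fin n → ℝ) (hv : ∀ j, 0 < v j)
    (hCW : compMat W = W) (hC : ∀ i j, 0 ≤ C i j)
    (hWC : ∀ i, (C *ᵥ v) i < (W *ᵥ v) i)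
    (θ : ℝ) (hθ : ∀ i, (C *ᵥ v) i / (W *ᵥ v) i ≤ θ) :
    ∀ μ ∈ spectrum ℂ ((W⁻¹ * C).map Complex.ofReal), ‖μ‖ ≤ θ := by
  intro μ hμ
  have hCvnn : ∀ i, 0 ≤ (C *ᵥ v) i := mulVec_nonneg hC (fun j => (hv j).le)
  have hWvpos : ∀ i, 0 < (W *ᵥ v) i := fun i => (hCvnn i).trans_lt (hWC i)
  have hWunit : IsUnit W := isUnit_of_compMat_pos W v hv (by rw [hCW]; exact hWvpos)
  have hWdet : IsUnit W.det := (Matrix.isUnit_iff_isUnit_det W).mp hWunit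
  rw [spectrum.mem_iff] at hμ
  rw [Matrix.isUnit_iff_isUnit_det, isUnit_iff_ne_zero, not_not] at hμ
  obtain ⟨u, hu0, huv⟩ := Matrix.exists_mulVec_eq_zero_iff.mpr hμ
  have heig : ((W⁻¹ * C).map Complex.ofReal) *ᵥ u = μ • u := by
    rw [Matrix.sub_mulVec] at huv
    have h1 : (algebraMap ℂ (Matrix (Fin n) (Fin n) ℂ) μ) *ᵥ u = μ • u := by
      rw [Algebra.algebraMap_eq_smul_one, Matrix.smul_mulVec, Matrix.one_mulVec]
    rw [h1] at huv
    exact (sub_eq_zero.mp huv).symm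
  have hWL : W * (W⁻¹ * C) = C := by
    rw [← mul_assoc, Matrix.mul_nonsing_inv _ hWdet, one_mul]
  have hcu : (C.map Complex.ofReal) *ᵥ u = μ • ((W.map Complex.ofReal) *ᵥ u) := by
    calc (C.map Complex.ofReal) *ᵥ u
        = ((W * (W⁻¹ * C)).map Complex.ofReal) *ᵥ u := by rw [hWL]
      _ = (W.map Complex.ofReal) *ᵥ (((W⁻¹ * C).map Complex.ofReal) *ᵥ u) := by
          rw [map_mul_ofReal, ← Matrix.mulVec_mulVec]
      _ = μ • ((W.map Complex.ofReal) *ᵥ u) := by rw [heig, Matrix.mulVec_smul]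
  obtain ⟨i, hui, hi⟩ := exists_max_ratio_c hv u hu0
  have a1 := key_lower_c W v u i (fun j => (hv j).le) hi
  rw [hCW] at a1
  have a2 := key_upper_c C hC v u i (fun j => (hv j).le) hi
  have a3 : ‖(C.map Complex.ofReal *ᵥ u) i‖
      = ‖μ‖ * ‖(W.map Complex.ofReal *ᵥ u) i‖ := by
    rw [hcu, Pi.smul_apply, smul_eq_mul, norm_mul]
  have key : ‖μ‖ * ((W *ᵥ v) i) ≤ (C *ᵥ v) i := by
    have b1 := mul_le_mul_of_nonneg_left a1 (norm_nonneg μ)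
    rw [a3] at a2
    have b2 : ‖μ‖ * (‖u i‖ * (W *ᵥ v) i)
        ≤ ‖u i‖ * (C *ᵥ v) i := by
      calc ‖μ‖ * (‖u i‖ * (W *ᵥ v) i)
          ≤ ‖μ‖ * (‖(W.map Complex.ofReal *ᵥ u) i‖ * v i) := b1
        _ ≤ ‖u i‖ * (C *ᵥ v) i := by rw [← mul_assoc]; exact a2
    nlinarith [hui]
  have h4 : ‖μ‖ ≤ (C *ᵥ v) i / (W *ᵥ v) i := (le_div_iff₀ (hWvpos i)).mpr key
  exact h4.trans (hθ i)

lemma compMat_mul_posdiag {Ω : Matrix (Fin n) (Fin n) ℝ} (hΩ : PosDiag Ω)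
    (X : Matrix (Fin n) (Fin n) ℝ) : compMat (X * Ω) = compMat X * Ω := by
  ext i j
  rw [mul_isDiag_apply hΩ.1, compMat_apply, compMat_apply, mul_isDiag_apply hΩ.1]
  by_cases h : i = j
  · rw [if_pos h, if_pos h, abs_mul, abs_of_pos (hΩ.2 j)]
  · rw [if_neg h, if_neg h, abs_mul, abs_of_pos (hΩ.2 j)]
    ring

lemma matAbs_mul_posdiag {Ω : Matrix (Fin n) (Fin n) ℝ} (hΩ : PosDiag Ω)
    (X : Matrix (Fin n) (Fin n) ℝ) : matAbs (X * Ω) = matAbs X * Ω := by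
  ext i j
  rw [mul_isDiag_apply hΩ.1, matAbs_apply, matAbs_apply, mul_isDiag_apply hΩ.1,
    abs_mul, abs_of_pos (hΩ.2 j)]

end Aux15

theorem stmt15 (A D M N φ Ω₁ Ω₂ Ψ V : Matrix (Fin n) (Fin n) ℝ)
    (q : Fin n → ℝ) (ζ : (Fin n → ℝ) → (Fin n → ℝ)) (γ : ℝ)
    (hγ : 0 < γ) (hΩ₁ : PosDiag Ω₁) (hΩ₂ : PosDiag Ω₂) (hφ : φ.IsDiag)
    (hA : IsHplus A)
    (hD : D = Matrix.diagonal (fun i => A i i))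
    (hsplit : A = (M + φ) - (N + φ))
    (hHsplit : IsMmat (compMat (M + φ) - matAbs (N + φ)))
    (hMφpos : ∀ i, 0 < (M + φ) i i)
    (hΨ : ∀ i j, 0 ≤ Ψ i j)
    (hLip : ∀ u v : Fin n → ℝ, ∀ i, |(ζ u - ζ v) i| ≤ (Ψ *ᵥ vecAbs (u - v)) i)
    (hV : PosDiag V)
    (hsdd : SDD ((compMat (M + φ) - matAbs (N + φ)) * V))
    (hcases :
      ((∀ i j, (D * Ω₁) i j ≤ Ω₂ i j) ∧
        ∀ i, 0 < ((compMat (M * Ω₁ + φ * Ω₁) - matAbs (N * Ω₁ + φ * Ω₁)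
          - matAbs A * Ψ * matAbs A⁻¹ * Ω₂) *ᵥ (V *ᵥ fun _ => (1 : ℝ))) i) ∨
      ((∀ i j, Ω₂ i j ≤ (D * Ω₁) i j) ∧
        ∀ i, 0 < ((Ω₂ - D * Ω₁ + compMat (M * Ω₁ + φ * Ω₁) - matAbs (N * Ω₁ + φ * Ω₁)
          - matAbs A * Ψ * matAbs A⁻¹ * Ω₂) *ᵥ (V *ᵥ fun _ => (1 : ℝ))) i)) :
    specRad ((Ω₂ + compMat (M * Ω₁) + matAbs (φ * Ω₁))⁻¹ *
      (matAbs (N * Ω₁ + φ * Ω₁) + matAbs (Ω₂ - A * Ω₁)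
        + (2 : ℝ) • (matAbs A * Ψ * matAbs A⁻¹ * Ω₂))) < 1 ∧
    ∀ x z : ℕ → Fin n → ℝ, Method31 A M N φ Ω₁ Ω₂ q ζ γ x z →
      ∀ xs zs : Fin n → ℝ,
        A *ᵥ zs = γ⁻¹ • (Ω₂ *ᵥ (vecAbs xs - xs)) - q →
        (Ω₂ + M * Ω₁ + φ * Ω₁) *ᵥ xs =
          (N * Ω₁ + φ * Ω₁) *ᵥ xs + (Ω₂ - A * Ω₁) *ᵥ vecAbs xs
            - γ • (A *ᵥ ζ zs) - γ • q →
        Tendsto z atTop (𝓝 zs) ∧ SolvesICP A q ζ zs := by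
  classical
  by_cases hn : n = 0
  · subst hn
    haveI hms : Subsingleton (Matrix (Fin 0) (Fin 0) ℂ) :=
      ⟨fun a b => by ext i j; exact i.elim0⟩
    haveI hvs : Subsingleton (Fin 0 → ℝ) := ⟨fun a b => funext fun i => i.elim0⟩
    constructor
    · have hspec : spectrum ℂ (((Ω₂ + compMat (M * Ω₁) + matAbs (φ * Ω₁))⁻¹ *
          (matAbs (N * Ω₁ + φ * Ω₁) + matAbs (Ω₂ - A * Ω₁)
            + (2 : ℝ) • (matAbs A * Ψ * matAbs A⁻¹ * Ω₂))).map Complex.ofReal) = ∅ :=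
        Set.eq_empty_iff_forall_notMem.mpr fun μ hμ =>
          (spectrum.mem_iff.mp hμ) (isUnit_of_subsingleton _)
      rw [specRad, hspec, Set.image_empty, Real.sSup_empty]
      norm_num
    · intro x z _ xs zs _ _
      refine ⟨?_, fun i => i.elim0, fun i => i.elim0, by simp [dotProduct]⟩
      have hz : z = fun _ => zs := funext fun k => Subsingleton.elim _ _
      rw [hz]
      exact tendsto_const_nhds
  haveI : Nonempty (Fin n) := ⟨⟨0, Nat.pos_of_ne_zero hn⟩⟩
  have hune : (Finset.univ : Finset (Fin n)).Nonempty := Finset.univ_nonempty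
  set v : Fin n → ℝ := V *ᵥ (fun _ => 1) with hvdef
  have hv : ∀ i, 0 < v i := by
    intro i
    have h := Aux15.isDiag_mulVec hV.1 (fun _ => (1 : ℝ)) i
    rw [hvdef, h, mul_one]
    exact hV.2 i
  clear_value v
  set X := matAbs A * Ψ * matAbs A⁻¹ * Ω₂ with hXdef
  set CC := matAbs (N * Ω₁ + φ * Ω₁) + matAbs (Ω₂ - A * Ω₁) + (2 : ℝ) • X with hCCdef
  set W := Ω₂ + compMat (M * Ω₁) + matAbs (φ * Ω₁) with hWdef
  set Bm := Ω₂ + M * Ω₁ + φ * Ω₁ with hBmdef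
  have hΩ₂nn : ∀ i j, 0 ≤ Ω₂ i j := by
    intro i j
    by_cases h : i = j
    · subst h; exact (hΩ₂.2 i).le
    · rw [hΩ₂.1 h]
  have hXnn : ∀ i j, 0 ≤ X i j := by
    refine Aux15.mul_entry_nonneg (Aux15.mul_entry_nonneg (Aux15.mul_entry_nonneg ?_ hΨ) ?_) hΩ₂nn
    · exact fun i j => abs_nonneg (A i j)
    · exact fun i j => abs_nonneg (A⁻¹ i j)
  have hCCnn : ∀ i j, 0 ≤ CC i j := by
    intro i j
    rw [hCCdef]
    simp only [Matrix.add_apply, Matrix.smul_apply, smul_eq_mul]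
    have h1 := abs_nonneg ((N * Ω₁ + φ * Ω₁) i j)
    have h2 := abs_nonneg ((Ω₂ - A * Ω₁) i j)
    have h3 := hXnn i j
    have e1 : matAbs (N * Ω₁ + φ * Ω₁) i j = |(N * Ω₁ + φ * Ω₁) i j| := rfl
    have e2 : matAbs (Ω₂ - A * Ω₁) i j = |(Ω₂ - A * Ω₁) i j| := rfl
    rw [e1, e2]; linarith
  -- I1
  have I1 : compMat Bm = Ω₂ + compMat (M * Ω₁ + φ * Ω₁) := by
    ext i j
    by_cases h : i = j
    · subst h
      simp only [hBmdef, Matrix.add_apply, Aux15.compMat_apply, eq_self_iff_true,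
        if_true, Aux15.mul_isDiag_apply hΩ₁.1]
      have hMφ : 0 < M i i + φ i i := by simpa [Matrix.add_apply] using hMφpos i
      have h1 : 0 < Ω₁ i i := hΩ₁.2 i
      have h2 : 0 < Ω₂ i i := hΩ₂.2 i
      rw [abs_of_pos (by nlinarith), abs_of_pos (by nlinarith)]
      ring
    · simp only [hBmdef, Matrix.add_apply, Aux15.compMat_apply, if_neg h,
        Aux15.mul_isDiag_apply hΩ₁.1, hΩ₂.1 h, hφ h, zero_mul, add_zero, zero_add]
  -- comparison Abar ≤ compMat A entrywise
  have I4 : ∀ i j, (compMat (M + φ) - matAbs (N + φ)) i j ≤ compMat A i j := by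
    intro i j
    have hsapply : A i j = (M + φ) i j - (N + φ) i j := by rw [hsplit]; rfl
    by_cases h : i = j
    · subst h
      simp only [Matrix.sub_apply, Aux15.compMat_apply, Aux15.matAbs_apply,
        eq_self_iff_true, if_true, hsapply]
      exact abs_sub_abs_le_abs_sub _ _
    · simp only [Matrix.sub_apply, Aux15.compMat_apply, Aux15.matAbs_apply,
        if_neg h, hsapply]
      have := abs_sub ((M + φ) i j) ((N + φ) i j)
      linarith
  have hΩ₁vnn : ∀ j, 0 ≤ (Ω₁ *ᵥ v) j := by
    intro j
    rw [Aux15.isDiag_mulVec hΩ₁.1]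
    exact (mul_pos (hΩ₁.2 j) (hv j)).le
  have h21 : ∀ i, (compMat (M * Ω₁ + φ * Ω₁) *ᵥ v) i - (matAbs (N * Ω₁ + φ * Ω₁) *ᵥ v) i
      ≤ ((compMat A * Ω₁) *ᵥ v) i := by
    intro i
    have e3 : compMat (M * Ω₁ + φ * Ω₁) - matAbs (N * Ω₁ + φ * Ω₁)
        = (compMat (M + φ) - matAbs (N + φ)) * Ω₁ := by
      rw [← Matrix.add_mul, ← Matrix.add_mul, Aux15.compMat_mul_posdiag hΩ₁,
        Aux15.matAbs_mul_posdiag hΩ₁, Matrix.sub_mul]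
    have e5 : (compMat (M * Ω₁ + φ * Ω₁) *ᵥ v) i - (matAbs (N * Ω₁ + φ * Ω₁) *ᵥ v) i
        = ((compMat (M + φ) - matAbs (N + φ)) *ᵥ (Ω₁ *ᵥ v)) i := by
      rw [Matrix.mulVec_mulVec, ← e3, Matrix.sub_mulVec, Pi.sub_apply]
    rw [e5, ← Matrix.mulVec_mulVec]
    exact Aux15.mulVec_mono_mat I4 hΩ₁vnn i
  -- main inequality
  have hBmv : ∀ i, (CC *ᵥ v) i < (compMat Bm *ᵥ v) i := by
    intro i
    have hDdiag : ∀ i j, (D * Ω₁) i j = if i = j then A i i * Ω₁ i i else 0 := by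
      intro i j
      rw [Aux15.mul_isDiag_apply hΩ₁.1, hD]
      by_cases h : i = j
      · subst h
        rw [if_pos rfl, Matrix.diagonal_apply_eq]
      · rw [if_neg h, Matrix.diagonal_apply_ne _ h, zero_mul]
    rcases hcases with ⟨hc, hpos⟩ | ⟨hc, hpos⟩
    · have I2 : matAbs (Ω₂ - A * Ω₁) = Ω₂ - compMat A * Ω₁ := by
        ext i' j'
        by_cases h : i' = j'
        · subst h
          have hle : A i' i' * Ω₁ i' i' ≤ Ω₂ i' i' := by
            have := hc i' i'; rw [hDdiag i' i', if_pos rfl] at this; exact this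
          simp only [Aux15.matAbs_apply, Matrix.sub_apply, Aux15.compMat_apply,
            eq_self_iff_true, if_true, Aux15.mul_isDiag_apply hΩ₁.1]
          rw [abs_of_nonneg (by linarith), abs_of_pos (hA.2 i')]
        · simp only [Aux15.matAbs_apply, Matrix.sub_apply, Aux15.compMat_apply,
            if_neg h, Aux15.mul_isDiag_apply hΩ₁.1, hΩ₂.1 h, zero_sub, abs_neg,
            abs_mul]
          rw [abs_of_pos (hΩ₁.2 j')]
          ring
      have hp := hpos i
      simp only [Matrix.sub_mulVec, Pi.sub_apply] at hp
      rw [hCCdef, I1, I2]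
      simp only [Matrix.add_mulVec, Matrix.sub_mulVec, Pi.add_apply, Pi.sub_apply,
        Matrix.smul_mulVec, Pi.smul_apply, smul_eq_mul]
      linarith [h21 i]
    · have I2 : matAbs (Ω₂ - A * Ω₁) = (2 : ℝ) • (D * Ω₁) - Ω₂ - compMat A * Ω₁ := by
        ext i' j'
        by_cases h : i' = j'
        · subst h
          have hle : Ω₂ i' i' ≤ A i' i' * Ω₁ i' i' := by
            have := hc i' i'; rw [hDdiag i' i', if_pos rfl] at this; exact this
          simp only [Aux15.matAbs_apply, Matrix.sub_apply, Matrix.smul_apply,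
            hDdiag i' i', eq_self_iff_true, if_true, smul_eq_mul, Aux15.compMat_apply,
            Aux15.mul_isDiag_apply hΩ₁.1]
          rw [abs_of_nonpos (by linarith), abs_of_pos (hA.2 i')]
          ring
        · simp only [Aux15.matAbs_apply, Matrix.sub_apply, Matrix.smul_apply,
            hDdiag i' j', if_neg h, smul_eq_mul, Aux15.compMat_apply,
            Aux15.mul_isDiag_apply hΩ₁.1, hΩ₂.1 h, zero_sub, abs_neg, abs_mul,
            mul_zero]
          rw [abs_of_pos (hΩ₁.2 j')]
          ring
      have hp := hpos i
      simp only [Matrix.sub_mulVec, Matrix.add_mulVec, Pi.sub_apply, Pi.add_apply] at hp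
      rw [hCCdef, I1, I2]
      simp only [Matrix.add_mulVec, Matrix.sub_mulVec, Pi.add_apply, Pi.sub_apply,
        Matrix.smul_mulVec, Pi.smul_apply, smul_eq_mul]
      linarith [h21 i]
  -- W dominates compMat Bm
  have I5 : ∀ i j, compMat Bm i j ≤ W i j := by
    intro i j
    rw [I1, hWdef]
    by_cases h : i = j
    · subst h
      simp only [Matrix.add_apply, Aux15.compMat_apply, Aux15.matAbs_apply,
        eq_self_iff_true, if_true]
      have := abs_add_le ((M * Ω₁) i i) ((φ * Ω₁) i i)
      linarith
    · simp only [Matrix.add_apply, Aux15.compMat_apply, Aux15.matAbs_apply, if_neg h]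
      have eφ : (φ * Ω₁) i j = 0 := by rw [Aux15.mul_isDiag_apply hΩ₁.1, hφ h, zero_mul]
      rw [eφ, add_zero, abs_zero, add_zero]
  have hWge : ∀ i, (compMat Bm *ᵥ v) i ≤ (W *ᵥ v) i :=
    Aux15.mulVec_mono_mat I5 (fun j => (hv j).le)
  have hCWv : ∀ i, (CC *ᵥ v) i < (W *ᵥ v) i := fun i => (hBmv i).trans_le (hWge i)
  have hCCvnn : ∀ i, 0 ≤ (CC *ᵥ v) i := Aux15.mulVec_nonneg hCCnn (fun j => (hv j).le)
  have hWvpos : ∀ i, 0 < (W *ᵥ v) i := fun i => (hCCvnn i).trans_lt (hCWv i)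
  have hBmvpos : ∀ i, 0 < (compMat Bm *ᵥ v) i := fun i => (hCCvnn i).trans_lt (hBmv i)
  have I6 : compMat W = W := by
    ext i j
    by_cases h : i = j
    · subst h
      have hWii : 0 ≤ W i i := by
        rw [hWdef]
        simp only [Matrix.add_apply, Aux15.compMat_apply, Aux15.matAbs_apply,
          eq_self_iff_true, if_true]
        have := abs_nonneg ((M * Ω₁) i i)
        have := abs_nonneg ((φ * Ω₁) i i)
        linarith [hΩ₂.2 i]
      rw [Aux15.compMat_apply, if_pos rfl, abs_of_nonneg hWii]
    · have hWij : W i j = -|(M * Ω₁) i j| := by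
        rw [hWdef]
        simp only [Matrix.add_apply, Aux15.compMat_apply, Aux15.matAbs_apply, if_neg h]
        have eφ : (φ * Ω₁) i j = 0 := by rw [Aux15.mul_isDiag_apply hΩ₁.1, hφ h, zero_mul]
        rw [hΩ₂.1 h, eφ, abs_zero]
        ring
      rw [Aux15.compMat_apply, if_neg h, hWij, abs_neg, abs_abs]
  -- θ for the spectral radius
  set θ := Finset.univ.sup' hune (fun i => (CC *ᵥ v) i / (W *ᵥ v) i) with hθdef
  have hθub : ∀ i, (CC *ᵥ v) i / (W *ᵥ v) i ≤ θ := by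
    intro i
    rw [hθdef]
    exact Finset.le_sup' (f := fun i => (CC *ᵥ v) i / (W *ᵥ v) i) (Finset.mem_univ i)
  have hθ0 : 0 ≤ θ := by
    obtain ⟨i⟩ := (inferInstance : Nonempty (Fin n))
    exact le_trans (div_nonneg (hCCvnn i) (hWvpos i).le) (hθub i)
  have hθlt : θ < 1 := by
    rw [hθdef, Finset.sup'_lt_iff]
    intro i _
    rw [div_lt_one (hWvpos i)]
    exact hCWv i
  constructor
  · refine lt_of_le_of_lt (Real.sSup_le ?_ hθ0) hθlt
    rintro y ⟨μ, hμ, rfl⟩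
    exact Aux15.spec_bound W CC v hv I6 hCCnn hCWv θ hθub μ hμ
  -- convergence part
  intro x z hmeth xs zs hzs hxs
  obtain ⟨hm1, hm2⟩ := hmeth
  have hBunit : IsUnit Bm := Aux15.isUnit_of_compMat_pos Bm v hv hBmvpos
  have hBdet : IsUnit Bm.det := (Matrix.isUnit_iff_isUnit_det Bm).mp hBunit
  -- A is invertible
  have hAunit : IsUnit A := by
    set w : Fin n → ℝ := (compMat A)⁻¹ *ᵥ (fun _ => 1) with hwdef
    have hMAdet : IsUnit (compMat A).det := (Matrix.isUnit_iff_isUnit_det _).mp hA.1.2.1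
    have hCAw : compMat A *ᵥ w = fun _ => 1 := by
      rw [hwdef, Matrix.mulVec_mulVec, Matrix.mul_nonsing_inv _ hMAdet, Matrix.one_mulVec]
    have hwnn : ∀ j, 0 ≤ w j :=
      fun j => Aux15.mulVec_nonneg hA.1.2.2 (fun _ => zero_le_one) j
    have hwpos : ∀ j, 0 < w j := by
      intro j
      rcases lt_or_eq_of_le (hwnn j) with h | h
      · exact h
      · exfalso
        have hb : (compMat A *ᵥ w) j ≤ compMat A j j * w j := by
          have e : (compMat A *ᵥ w) j = ∑ k, compMat A j k * w k := rfl
          rw [e, ← Finset.sum_erase_add _ _ (Finset.mem_univ j)]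
          have hterm : ∀ k ∈ Finset.univ.erase j, compMat A j k * w k ≤ 0 := by
            intro k hk
            refine mul_nonpos_of_nonpos_of_nonneg ?_ (hwnn k)
            rw [Aux15.compMat_apply, if_neg (fun hh => (Finset.ne_of_mem_erase hk) hh.symm)]
            exact neg_nonpos.mpr (abs_nonneg _)
          have := Finset.sum_nonpos hterm
          linarith
        rw [hCAw] at hb
        rw [← h, mul_zero] at hb
        norm_num at hb
    exact Aux15.isUnit_of_compMat_pos A w hwpos (by rw [hCAw]; intro i; norm_num)
  have hAdet : IsUnit A.det := (Matrix.isUnit_iff_isUnit_det A).mp hAunit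
  have hAinvmul : ∀ y : Fin n → ℝ, A⁻¹ *ᵥ (A *ᵥ y) = y := by
    intro y
    rw [Matrix.mulVec_mulVec, Matrix.nonsing_inv_mul _ hAdet, Matrix.one_mulVec]
  have hAcancel : ∀ y1 y2 : Fin n → ℝ, A *ᵥ y1 = A *ᵥ y2 → y1 = y2 := by
    intro y1 y2 h
    have := congrArg (fun t => A⁻¹ *ᵥ t) h
    simpa [hAinvmul] using this
  -- the fixed point identities
  have hAΩ : A * Ω₁ = M * Ω₁ - N * Ω₁ := by rw [hsplit]; noncomm_ring
  have hAzq : Ω₂ *ᵥ (vecAbs xs - xs) = γ • (A *ᵥ zs) + γ • q := by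
    rw [hzs, smul_sub, smul_smul, mul_inv_cancel₀ hγ.ne', one_smul]
    abel
  have hfix : Ω₁ *ᵥ (xs + vecAbs xs) = γ • (zs - ζ zs) := by
    apply hAcancel
    have hxs' := hxs
    rw [hBmdef] at hxs'
    funext i
    have h1 := congrFun hxs' i
    have h2 := congrFun hAzq i
    simp only [hAΩ, Matrix.sub_mulVec, Matrix.add_mulVec, Matrix.mulVec_add,
      Matrix.mulVec_sub, Matrix.mulVec_smul, Matrix.mulVec_mulVec, Pi.add_apply,
      Pi.sub_apply, Pi.smul_apply, smul_eq_mul] at h1 h2 ⊢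
    linarith
  have hfix2 : zs - ζ zs = γ⁻¹ • (Ω₁ *ᵥ (xs + vecAbs xs)) := by
    rw [hfix, smul_smul, inv_mul_cancel₀ hγ.ne', one_smul]
  have hsolves : SolvesICP A q ζ zs := by
    refine ⟨?_, ?_, ?_⟩
    · intro i
      have e : A *ᵥ zs + q = γ⁻¹ • (Ω₂ *ᵥ (vecAbs xs - xs)) := by
        rw [hzs]; abel
      rw [show A.mulVec zs = A *ᵥ zs from rfl, e]
      have e2 : (Ω₂ *ᵥ (vecAbs xs - xs)) i = Ω₂ i i * (|xs i| - xs i) := by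
        rw [Aux15.isDiag_mulVec hΩ₂.1]
        rfl
      rw [Pi.smul_apply, smul_eq_mul, e2]
      exact mul_nonneg (inv_nonneg.mpr hγ.le)
        (mul_nonneg (hΩ₂.2 i).le (by linarith [le_abs_self (xs i)]))
    · intro i
      rw [hfix2, Pi.smul_apply, smul_eq_mul, Aux15.isDiag_mulVec hΩ₁.1]
      have e : (xs + vecAbs xs) i = xs i + |xs i| := rfl
      rw [e]
      exact mul_nonneg (inv_nonneg.mpr hγ.le)
        (mul_nonneg (hΩ₁.2 i).le (by linarith [neg_le_abs (xs i)]))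
    · rw [dotProduct]
      refine Finset.sum_eq_zero fun i _ => ?_
      have e : A *ᵥ zs + q = γ⁻¹ • (Ω₂ *ᵥ (vecAbs xs - xs)) := by
        rw [hzs]; abel
      rw [show A.mulVec zs = A *ᵥ zs from rfl, e, hfix2]
      rw [Pi.smul_apply, Pi.smul_apply, smul_eq_mul, smul_eq_mul,
        Aux15.isDiag_mulVec hΩ₁.1, Aux15.isDiag_mulVec hΩ₂.1]
      have e1 : (xs + vecAbs xs) i = xs i + |xs i| := rfl
      have e2 : (vecAbs xs - xs) i = |xs i| - xs i := rfl
      rw [e1, e2]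
      have h0 : (xs i + |xs i|) * (|xs i| - xs i) = |xs i| ^ 2 - xs i ^ 2 := by ring
      rw [sq_abs] at h0
      have h0' : (xs i + |xs i|) * (|xs i| - xs i) = 0 := by rw [h0]; ring
      linear_combination (γ⁻¹ * Ω₁ i i * γ⁻¹ * Ω₂ i i) * h0'
  refine ⟨?_, hsolves⟩
  -- contraction ratio with respect to ⟨Bm⟩
  set θ2 := Finset.univ.sup' hune (fun i => (CC *ᵥ v) i / (compMat Bm *ᵥ v) i) with hθ2def
  have hθ2ub : ∀ i, (CC *ᵥ v) i / (compMat Bm *ᵥ v) i ≤ θ2 := by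
    intro i
    rw [hθ2def]
    exact Finset.le_sup' (f := fun i => (CC *ᵥ v) i / (compMat Bm *ᵥ v) i)
      (Finset.mem_univ i)
  have hθ20 : 0 ≤ θ2 := by
    obtain ⟨i⟩ := (inferInstance : Nonempty (Fin n))
    exact le_trans (div_nonneg (hCCvnn i) (hBmvpos i).le) (hθ2ub i)
  have hθ2lt : θ2 < 1 := by
    rw [hθ2def, Finset.sup'_lt_iff]
    intro i _
    rw [div_lt_one (hBmvpos i)]
    exact hBmv i
  have habs2 : ∀ a b : ℝ, |(|a| - a) - (|b| - b)| ≤ 2 * |a - b| := by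
    intro a b
    rw [abs_le]
    constructor <;>
    · rcases abs_cases a with ⟨h1, h2⟩ | ⟨h1, h2⟩ <;>
        rcases abs_cases b with ⟨h3, h4⟩ | ⟨h3, h4⟩ <;>
        rcases abs_cases (a - b) with ⟨h5, h6⟩ | ⟨h5, h6⟩ <;>
        rw [h1, h3, h5] <;> linarith
  -- the one-step estimate
  have hstep : ∀ k i, |(Bm *ᵥ (x (k+1) - xs)) i| ≤ (CC *ᵥ vecAbs (x k - xs)) i := by
    intro k i
    have hBmx : Bm *ᵥ x (k+1) = (N * Ω₁ + φ * Ω₁) *ᵥ x k + (Ω₂ - A * Ω₁) *ᵥ vecAbs (x k)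
        - γ • (A *ᵥ ζ (z k)) - γ • q := by
      rw [hm2 k, ← hBmdef, Matrix.mulVec_mulVec, Matrix.mul_nonsing_inv _ hBdet,
        Matrix.one_mulVec]
    have hzz : A *ᵥ (z k - zs)
        = γ⁻¹ • (Ω₂ *ᵥ (vecAbs (x k) - x k) - Ω₂ *ᵥ (vecAbs xs - xs)) := by
      rw [Matrix.mulVec_sub, hm1 k, hzs, smul_sub]
      abel
    have hzdiff : z k - zs
        = A⁻¹ *ᵥ (γ⁻¹ • (Ω₂ *ᵥ (vecAbs (x k) - x k) - Ω₂ *ᵥ (vecAbs xs - xs))) := by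
      rw [← hzz, hAinvmul]
    have hzabs : ∀ j', vecAbs (z k - zs) j'
        ≤ (matAbs A⁻¹ *ᵥ fun j => γ⁻¹ * 2 * ((Ω₂ *ᵥ vecAbs (x k - xs)) j)) j' := by
      intro j'
      have h1 : vecAbs (z k - zs) j'
          = |(A⁻¹ *ᵥ (γ⁻¹ • (Ω₂ *ᵥ (vecAbs (x k) - x k) - Ω₂ *ᵥ (vecAbs xs - xs)))) j'| := by
        rw [← hzdiff]; rfl
      rw [h1]
      refine Aux15.abs_mulVec_le A⁻¹ (fun j => ?_) j'
      have e1 : (γ⁻¹ • (Ω₂ *ᵥ (vecAbs (x k) - x k) - Ω₂ *ᵥ (vecAbs xs - xs))) j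
          = γ⁻¹ * (Ω₂ j j * ((|x k j| - x k j) - (|xs j| - xs j))) := by
        rw [Pi.smul_apply, smul_eq_mul, Pi.sub_apply, Aux15.isDiag_mulVec hΩ₂.1,
          Aux15.isDiag_mulVec hΩ₂.1]
        have e1a : (vecAbs (x k) - x k) j = |x k j| - x k j := rfl
        have e1b : (vecAbs xs - xs) j = |xs j| - xs j := rfl
        rw [e1a, e1b]
        ring
      have e2 : (Ω₂ *ᵥ vecAbs (x k - xs)) j = Ω₂ j j * |x k j - xs j| := by
        rw [Aux15.isDiag_mulVec hΩ₂.1]; rfl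
      rw [e1, e2, abs_mul, abs_mul, abs_of_pos (inv_pos.mpr hγ),
        abs_of_pos (hΩ₂.2 j)]
      have h4 := habs2 (x k j) (xs j)
      have h5 : (0 : ℝ) < γ⁻¹ := inv_pos.mpr hγ
      have h7 := mul_le_mul_of_nonneg_left h4 (mul_pos h5 (hΩ₂.2 j)).le
      nlinarith [h7]
    have hζb : ∀ j, |(ζ (z k) - ζ zs) j|
        ≤ γ⁻¹ * 2 * ((Ψ *ᵥ (matAbs A⁻¹ *ᵥ (Ω₂ *ᵥ vecAbs (x k - xs)))) j) := by
      intro j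
      refine (hLip (z k) zs j).trans ?_
      have h6 := Aux15.mulVec_mono_vec hΨ hzabs j
      rw [Aux15.mulVec_scalar_vec, Aux15.mulVec_scalar] at h6
      exact h6
    have t1 := Aux15.abs_mulVec_le (N * Ω₁ + φ * Ω₁) (a := x k - xs)
      (b := vecAbs (x k - xs)) (fun j => le_of_eq rfl) i
    have t2 := Aux15.abs_mulVec_le (Ω₂ - A * Ω₁) (a := vecAbs (x k) - vecAbs xs)
      (b := vecAbs (x k - xs))
      (fun j => abs_abs_sub_abs_le_abs_sub (x k j) (xs j)) i
    have t3 := Aux15.abs_mulVec_le A (a := ζ (z k) - ζ zs)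
      (b := fun j => γ⁻¹ * 2 * ((Ψ *ᵥ (matAbs A⁻¹ *ᵥ (Ω₂ *ᵥ vecAbs (x k - xs)))) j))
      hζb i
    rw [Aux15.mulVec_scalar] at t3
    have tX : (matAbs A *ᵥ (Ψ *ᵥ (matAbs A⁻¹ *ᵥ (Ω₂ *ᵥ vecAbs (x k - xs))))) i
        = (X *ᵥ vecAbs (x k - xs)) i := by
      rw [hXdef, ← Matrix.mulVec_mulVec, ← Matrix.mulVec_mulVec, ← Matrix.mulVec_mulVec]
    rw [tX] at t3
    have hBδ : Bm *ᵥ (x (k+1) - xs)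
        = (N * Ω₁ + φ * Ω₁) *ᵥ (x k - xs)
          + (Ω₂ - A * Ω₁) *ᵥ (vecAbs (x k) - vecAbs xs)
          - γ • (A *ᵥ (ζ (z k) - ζ zs)) := by
      rw [Matrix.mulVec_sub, hBmx, hxs]
      simp only [Matrix.mulVec_sub, smul_sub]
      abel
    have hL : (Bm *ᵥ (x (k+1) - xs)) i
        = ((N * Ω₁ + φ * Ω₁) *ᵥ (x k - xs)) i
          + ((Ω₂ - A * Ω₁) *ᵥ (vecAbs (x k) - vecAbs xs)) i
          - γ * ((A *ᵥ (ζ (z k) - ζ zs)) i) := by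
      rw [hBδ]
      simp only [Pi.add_apply, Pi.sub_apply, Pi.smul_apply, smul_eq_mul]
    have hR : (CC *ᵥ vecAbs (x k - xs)) i
        = (matAbs (N * Ω₁ + φ * Ω₁) *ᵥ vecAbs (x k - xs)) i
          + (matAbs (Ω₂ - A * Ω₁) *ᵥ vecAbs (x k - xs)) i
          + 2 * ((X *ᵥ vecAbs (x k - xs)) i) := by
      rw [hCCdef]
      simp only [Matrix.add_mulVec, Matrix.smul_mulVec, Pi.add_apply,
        Pi.smul_apply, smul_eq_mul]
    rw [hL, hR]
    set A1 := ((N * Ω₁ + φ * Ω₁) *ᵥ (x k - xs)) i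
    set A2 := ((Ω₂ - A * Ω₁) *ᵥ (vecAbs (x k) - vecAbs xs)) i
    set A3 := ((A *ᵥ (ζ (z k) - ζ zs)) i)
    have h1 := abs_add_le A1 A2
    have h2 := abs_sub (A1 + A2) (γ * A3)
    rw [abs_mul, abs_of_pos hγ] at h2
    have h3 : γ * |A3| ≤ 2 * ((X *ᵥ vecAbs (x k - xs)) i) := by
      have h3a := mul_le_mul_of_nonneg_left t3 hγ.le
      have h3b : γ * (γ⁻¹ * 2 * ((X *ᵥ vecAbs (x k - xs)) i))
          = 2 * ((X *ᵥ vecAbs (x k - xs)) i) := by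
        field_simp
      linarith
    linarith
  -- weighted-norm contraction step
  have hcontr : ∀ (c : ℝ), 0 ≤ c → ∀ (δ δp : Fin n → ℝ),
      (∀ i, |(Bm *ᵥ δp) i| ≤ (CC *ᵥ vecAbs δ) i) →
      (∀ j, |δ j| ≤ c * v j) → ∀ i, |δp i| ≤ θ2 * c * v i := by
    intro c hc δ δp hb hd i
    by_cases hδp : δp = 0
    · rw [hδp]
      simp only [Pi.zero_apply, abs_zero]
      exact mul_nonneg (mul_nonneg hθ20 hc) (hv i).le
    obtain ⟨i0, hpi0, hi0⟩ := Aux15.exists_max_ratio hv δp hδp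
    have k1 := Aux15.key_lower Bm v δp i0 (fun j => (hv j).le) hi0
    have k2 : (CC *ᵥ vecAbs δ) i0 ≤ c * (CC *ᵥ v) i0 := by
      have h := Aux15.mulVec_mono_vec hCCnn (a := vecAbs δ) (b := fun j => c * v j)
        (fun j => hd j) i0
      rwa [Aux15.mulVec_scalar] at h
    have k3 : (CC *ᵥ v) i0 ≤ θ2 * (compMat Bm *ᵥ v) i0 := by
      have h := hθ2ub i0
      rw [div_le_iff₀ (hBmvpos i0)] at h
      linarith
    have k4 : |δp i0| ≤ θ2 * c * v i0 := by
      have h5 : |δp i0| * (compMat Bm *ᵥ v) i0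
          ≤ θ2 * c * v i0 * (compMat Bm *ᵥ v) i0 := by
        calc |δp i0| * (compMat Bm *ᵥ v) i0 ≤ |(Bm *ᵥ δp) i0| * v i0 := k1
          _ ≤ (CC *ᵥ vecAbs δ) i0 * v i0 :=
              mul_le_mul_of_nonneg_right (hb i0) (hv i0).le
          _ ≤ c * (CC *ᵥ v) i0 * v i0 :=
              mul_le_mul_of_nonneg_right k2 (hv i0).le
          _ ≤ c * (θ2 * (compMat Bm *ᵥ v) i0) * v i0 := by
              have := mul_le_mul_of_nonneg_left k3 hc
              nlinarith [(hv i0).le]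
          _ = θ2 * c * v i0 * (compMat Bm *ᵥ v) i0 := by ring
      exact le_of_mul_le_mul_right h5 (hBmvpos i0)
    have h6 := hi0 i
    nlinarith [hv i0, hv i, k4, abs_nonneg (δp i),
      mul_le_mul_of_nonneg_right k4 (hv i).le]
  -- the geometric bound
  set c0 := Finset.univ.sup' hune (fun i => |x 0 i - xs i| / v i) with hc0def
  have hc0ub : ∀ i, |x 0 i - xs i| ≤ c0 * v i := by
    intro i
    have h1 : |x 0 i - xs i| / v i ≤ c0 := by
      rw [hc0def]
      exact Finset.le_sup' (f := fun i => |x 0 i - xs i| / v i) (Finset.mem_univ i)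
    rw [div_le_iff₀ (hv i)] at h1
    linarith
  have hc00 : 0 ≤ c0 := by
    obtain ⟨i⟩ := (inferInstance : Nonempty (Fin n))
    refine le_trans (div_nonneg (abs_nonneg (x 0 i - xs i)) (hv i).le) ?_
    rw [hc0def]
    exact Finset.le_sup' (f := fun i => |x 0 i - xs i| / v i) (Finset.mem_univ i)
  have hiter : ∀ k i, |x k i - xs i| ≤ θ2 ^ k * c0 * v i := by
    intro k
    induction k with
    | zero =>
      intro i
      simpa using hc0ub i
    | succ k ih =>
      intro i
      have hb : ∀ i, |(Bm *ᵥ (x (k+1) - xs)) i| ≤ (CC *ᵥ vecAbs (x k - xs)) i := hstep k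
      have hd : ∀ j, |(x k - xs) j| ≤ (θ2 ^ k * c0) * v j := fun j => ih j
      have h := hcontr (θ2 ^ k * c0) (by positivity) (x k - xs) (x (k+1) - xs) hb hd i
      have e : (x (k+1) - xs) i = x (k+1) i - xs i := rfl
      rw [e] at h
      calc |x (k+1) i - xs i| ≤ θ2 * (θ2 ^ k * c0) * v i := h
        _ = θ2 ^ (k+1) * c0 * v i := by ring
  have htendx : Tendsto x atTop (𝓝 xs) := by
    rw [tendsto_pi_nhds]
    intro i
    have h0 : Tendsto (fun k : ℕ => θ2 ^ k * (c0 * v i)) atTop (𝓝 0) := by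
      have h1 := tendsto_pow_atTop_nhds_zero_of_lt_one hθ20 hθ2lt
      simpa using h1.mul_const (c0 * v i)
    have h1 : Tendsto (fun k => x k i - xs i) atTop (𝓝 0) := by
      refine squeeze_zero_norm (fun k => ?_) h0
      rw [Real.norm_eq_abs]
      calc |x k i - xs i| ≤ θ2 ^ k * c0 * v i := hiter k i
        _ = θ2 ^ k * (c0 * v i) := by ring
    have h2 := h1.add (tendsto_const_nhds (x := xs i))
    simpa using h2
  -- continuity of the solution map
  have hmv : ∀ (P : Matrix (Fin n) (Fin n) ℝ), Continuous fun y : Fin n → ℝ => P *ᵥ y := by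
    intro P
    have h := LinearMap.continuous_of_finiteDimensional (Matrix.mulVecLin P)
    exact h.congr fun y => by simp [Matrix.mulVecLin_apply]
  have hFc : Continuous fun y : Fin n → ℝ =>
      A⁻¹ *ᵥ (γ⁻¹ • (Ω₂ *ᵥ (vecAbs y - y)) - q) := by
    refine (hmv A⁻¹).comp ?_
    refine Continuous.sub ?_ continuous_const
    refine Continuous.const_smul ?_ γ⁻¹
    refine (hmv Ω₂).comp ?_
    refine Continuous.sub ?_ continuous_id
    exact continuous_pi fun i => (continuous_apply i).abs
  have hzF : ∀ k, z k = A⁻¹ *ᵥ (γ⁻¹ • (Ω₂ *ᵥ (vecAbs (x k) - x k)) - q) := by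
    intro k
    calc z k = A⁻¹ *ᵥ (A *ᵥ z k) := (hAinvmul (z k)).symm
      _ = _ := by rw [hm1 k]
  have hzsF : zs = A⁻¹ *ᵥ (γ⁻¹ • (Ω₂ *ᵥ (vecAbs xs - xs)) - q) := by
    calc zs = A⁻¹ *ᵥ (A *ᵥ zs) := (hAinvmul zs).symm
      _ = _ := by rw [hzs]
  have hz' : z = (fun y : Fin n → ℝ => A⁻¹ *ᵥ (γ⁻¹ • (Ω₂ *ᵥ (vecAbs y - y)) - q)) ∘ x :=
    funext fun k => hzF k
  rw [hz', hzsF]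
  exact (hFc.tendsto xs).comp htendx



end
end
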